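/- arXiv:2406.03312 — 7 statements merged into one kernel-verified Lean document; each statement's English description precedes it below -/
import Mathlib

section
/- Let R be a finite commutative local ring in which 2 is a zero-divisor. Then the quaternion ring H(R) is a local ring, and its Jacobson radical is J(H(R)) = {x₁ + x₂i + x₃j + x₄k : x₁ + x₂ + x₃ + x₄ ∈ J(R)}, where J(R) is the Jacobson radical of R. -/
/-- A unit `u` of a ring is an *exceptional unit* if `1 - u` is also a unit. -/
def IsExceptionalUnit {R : Type*} [Ring R] (u : R) : Prop :=
  IsUnit u ∧ IsUnit (1 - u)

/-- `phiEU R k c` is the number of representations of `c` as an (ordered) sum of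
`k` exceptional units of `R`, i.e. the number of `k`-tuples `(x 0, …, x (k-1))`
of exceptional units with `x 0 + ⋯ + x (k-1) = c`. -/
noncomputable def phiEU (R : Type*) [Ring R] (k : ℕ) (c : R) : ℕ :=
  Nat.card {x : Fin k → R // (∀ i, IsExceptionalUnit (x i)) ∧ ∑ i, x i = c}

section Aux

variable {R : Type*} [CommRing R]

/-- sum of the four components of a quaternion -/
private def qsum (x : Quaternion R) : R := x.re + x.imI + x.imJ + x.imK

private lemma qsum_mul (x y : Quaternion R) :
    qsum (x * y) = qsum x * qsum y - 2 *
      (x.imI * y.imI + x.imJ * y.imJ + x.imK * y.imK +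
        x.imK * y.imJ + x.imI * y.imK + x.imJ * y.imI) := by
  simp only [qsum, Quaternion.re_mul, Quaternion.imI_mul, Quaternion.imJ_mul,
    Quaternion.imK_mul]
  ring

private lemma normSq_sub_qsum_sq (x : Quaternion R) :
    Quaternion.normSq x = qsum x ^ 2 - 2 *
      (x.re * x.imI + x.re * x.imJ + x.re * x.imK + x.imI * x.imJ +
        x.imI * x.imK + x.imJ * x.imK) := by
  rw [Quaternion.normSq_def']
  simp only [qsum]
  ring

variable [IsLocalRing R] (h2 : (2 : R) ∈ IsLocalRing.maximalIdeal R)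

include h2

private lemma qsum_mul_mem (x y : Quaternion R) :
    qsum (x * y) - qsum x * qsum y ∈ IsLocalRing.maximalIdeal R := by
  rw [qsum_mul]
  have : qsum x * qsum y - 2 *
      (x.imI * y.imI + x.imJ * y.imJ + x.imK * y.imK +
        x.imK * y.imJ + x.imI * y.imK + x.imJ * y.imI) - qsum x * qsum y
      = -(2 * (x.imI * y.imI + x.imJ * y.imJ + x.imK * y.imK +
        x.imK * y.imJ + x.imI * y.imK + x.imJ * y.imI)) := by ring
  rw [this]
  exact neg_mem (Ideal.mul_mem_right _ _ h2)

/-- If the component-sum of `x` is a unit, then `x` is a unit in the quaternions. -/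
private lemma isUnit_of_qsum (x : Quaternion R) (h : IsUnit (qsum x)) :
    IsUnit x := by
  have hn : IsUnit (Quaternion.normSq x) := by
    by_contra hn
    have hmem : Quaternion.normSq x ∈ IsLocalRing.maximalIdeal R := hn
    have h1 : qsum x ^ 2 ∈ IsLocalRing.maximalIdeal R := by
      have : qsum x ^ 2 = Quaternion.normSq x + 2 *
          (x.re * x.imI + x.re * x.imJ + x.re * x.imK + x.imI * x.imJ +
            x.imI * x.imK + x.imJ * x.imK) := by
        rw [normSq_sub_qsum_sq]; ring
      rw [this]
      exact add_mem hmem (Ideal.mul_mem_right _ _ h2)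
    exact (IsLocalRing.maximalIdeal.isMaximal R).ne_top
      (Ideal.eq_top_of_isUnit_mem _ h1 (h.pow 2))
  obtain ⟨u, hu⟩ := hn
  have hinv : (u : R) * ((u⁻¹ : Rˣ) : R) = 1 := u.mul_inv
  have hinv' : ((u⁻¹ : Rˣ) : R) * (u : R) = 1 := u.inv_mul
  set c : Quaternion R := star x * (((u⁻¹ : Rˣ) : R) : Quaternion R) with hc
  have hxc : x * c = 1 := by
    rw [hc, ← mul_assoc, Quaternion.self_mul_star, ← hu, ← Quaternion.coe_mul, hinv,
      Quaternion.coe_one]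
  have hcx : c * x = 1 := by
    rw [hc, mul_assoc, Quaternion.coe_commutes, ← mul_assoc, Quaternion.star_mul_self,
      ← hu, ← Quaternion.coe_mul, hinv, Quaternion.coe_one]
  exact ⟨⟨x, c, hxc, hcx⟩, rfl⟩

private lemma isUnit_qsum_of_isUnit (x : Quaternion R) (h : IsUnit x) :
    IsUnit (qsum x) := by
  obtain ⟨u, hu⟩ := h
  set v : Quaternion R := ((u⁻¹ : (Quaternion R)ˣ) : Quaternion R) with hv
  have hxv : x * v = 1 := by rw [← hu, hv]; exact u.mul_inv
  have h1 : qsum (x * v) = 1 := by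
    rw [hxv]; simp [qsum, Quaternion.re_one, Quaternion.imI_one, Quaternion.imJ_one,
            Quaternion.imK_one]
  have h2' := qsum_mul_mem h2 x v
  rw [h1] at h2'
  by_contra hn
  have hmem : qsum x ∈ IsLocalRing.maximalIdeal R := hn
  have : (1 : R) ∈ IsLocalRing.maximalIdeal R := by
    have heq : (1 : R) = (1 - qsum x * qsum v) + qsum x * qsum v := by ring
    rw [heq]
    exact add_mem h2' (Ideal.mul_mem_right _ _ hmem)
  exact (IsLocalRing.maximalIdeal.isMaximal R).ne_top (Ideal.eq_top_of_isUnit_mem _ this isUnit_one)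

private lemma isUnit_iff_qsum (x : Quaternion R) :
    IsUnit x ↔ IsUnit (qsum x) :=
  ⟨isUnit_qsum_of_isUnit h2 x, isUnit_of_qsum h2 x⟩

end Aux

/-- If `R` is a finite commutative local ring in which `2` is a zero-divisor,
then `H(R)` is a local ring whose Jacobson radical is
`{x₁ + x₂i + x₃j + x₄k : x₁ + x₂ + x₃ + x₄ ∈ J(R)}`. -/
theorem quaternion_ring_local_of_two_zero_divisor
    (R : Type*) [CommRing R] [Fintype R] [IsLocalRing R]
    (h2 : ∃ y : R, y ≠ 0 ∧ 2 * y = 0) :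
    IsLocalRing (Quaternion R) ∧
      ∀ x : Quaternion R,
        x ∈ (⊥ : Ideal (Quaternion R)).jacobson ↔
          x.re + x.imI + x.imJ + x.imK ∈ (⊥ : Ideal R).jacobson := by
  -- 2 is a nonunit, hence in the maximal ideal
  obtain ⟨y, hy, hy2⟩ := h2
  have h2m : (2 : R) ∈ IsLocalRing.maximalIdeal R := by
    intro h
    exact hy (h.mul_left_cancel (by rw [mul_zero]; exact hy2))
  have hiff := isUnit_iff_qsum h2m
  have hqsum : ∀ x : Quaternion R, qsum x = x.re + x.imI + x.imJ + x.imK := fun x => rfl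
  have hJ : ∀ c : R, c ∈ (⊥ : Ideal R).jacobson ↔ ¬ IsUnit c := by
    intro c
    rw [IsLocalRing.jacobson_eq_maximalIdeal ⊥ bot_ne_top]
    exact Iff.rfl
  constructor
  · haveI : Nontrivial (Quaternion R) := inferInstance
    refine { isUnit_or_isUnit_of_add_one := ?_ }
    intro a b hab
    have hb : b = 1 - a := eq_sub_of_add_eq' hab
    subst hb
    rcases IsLocalRing.isUnit_or_isUnit_one_sub_self (qsum a) with h | h
    · exact Or.inl ((hiff a).mpr h)
    · refine Or.inr ((hiff (1 - a)).mpr ?_)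
      have : qsum (1 - a) = 1 - qsum a := by
        simp only [qsum, Quaternion.re_sub, Quaternion.imI_sub, Quaternion.imJ_sub,
          Quaternion.imK_sub, Quaternion.re_one, Quaternion.imI_one, Quaternion.imJ_one,
          Quaternion.imK_one]
        ring
      rw [this]; exact h
  · intro x
    rw [← hqsum, hJ]
    constructor
    · -- x ∈ jacobson ⊥ → qsum x nonunit
      intro hx hunit
      obtain ⟨u, hu⟩ := hunit
      -- choose y₀ = -(u⁻¹) as a scalar quaternion
      set r₀ : R := -((u⁻¹ : Rˣ) : R) with hr₀
      set y₀ : Quaternion R := (r₀ : Quaternion R) with hy₀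
      obtain ⟨z, hz⟩ := Ideal.mem_jacobson_iff.mp hx y₀
      rw [Ideal.mem_bot] at hz
      -- z * (y₀ * x + 1) = 1
      have hz1 : z * (y₀ * x + 1) = 1 := by
        have : z * y₀ * x + z - 1 = 0 := hz
        have h' : z * y₀ * x + z = 1 := sub_eq_zero.mp this
        rw [mul_add, mul_one, ← mul_assoc]; exact h'
      -- qsum (y₀ * x + 1) ∈ m
      have hqy₀ : qsum y₀ = -((u⁻¹ : Rˣ) : R) := by
        simp [qsum, y₀, hr₀]
      have hm1 : qsum (y₀ * x + 1) - (qsum y₀ * qsum x + 1) ∈ IsLocalRing.maximalIdeal R := by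
        have h1 : qsum (y₀ * x + 1) = qsum (y₀ * x) + 1 := by
          simp [qsum, Quaternion.re_add, Quaternion.imI_add, Quaternion.imJ_add,
            Quaternion.imK_add, Quaternion.re_one, Quaternion.imI_one, Quaternion.imJ_one,
            Quaternion.imK_one]
          ring
        rw [h1]
        have := qsum_mul_mem h2m y₀ x
        simpa using this
      have hval : qsum y₀ * qsum x + 1 = 0 := by
        rw [hqy₀, ← hu]
        have huinv : ((u⁻¹ : Rˣ) : R) * (u : R) = 1 := u.inv_mul
        linear_combination -huinv
      have hm2 : qsum (y₀ * x + 1) ∈ IsLocalRing.maximalIdeal R := by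
        have h' := hm1
        rw [hval] at h'
        simpa using h'
      -- but z * (y₀*x+1) = 1 forces y₀*x+1 to be a unit via qsum
      have hmul := qsum_mul_mem h2m z (y₀ * x + 1)
      rw [hz1] at hmul
      have h1m : (1 : R) ∈ IsLocalRing.maximalIdeal R := by
        have hq1 : qsum (1 : Quaternion R) = 1 := by
          simp [qsum, Quaternion.re_one, Quaternion.imI_one, Quaternion.imJ_one,
            Quaternion.imK_one]
        rw [hq1] at hmul
        have : (1 : R) = (1 - qsum z * qsum (y₀ * x + 1)) + qsum z * qsum (y₀ * x + 1) := by
          ring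
        rw [this]
        exact add_mem (by simpa using hmul) (Ideal.mul_mem_left _ _ hm2)
      exact (IsLocalRing.maximalIdeal.isMaximal R).ne_top
        (Ideal.eq_top_of_isUnit_mem _ h1m isUnit_one)
    · -- qsum x nonunit → x ∈ jacobson ⊥
      intro hx
      rw [Ideal.mem_jacobson_iff]
      intro w
      have hu : IsUnit (w * x + 1) := by
        refine (hiff _).mpr ?_
        have h1 : qsum (w * x + 1) = qsum (w * x) + 1 := by
          simp [qsum, Quaternion.re_add, Quaternion.imI_add, Quaternion.imJ_add,
            Quaternion.imK_add, Quaternion.re_one, Quaternion.imI_one, Quaternion.imJ_one,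
            Quaternion.imK_one]
          ring
        by_contra hnu
        have hm : qsum (w * x + 1) ∈ IsLocalRing.maximalIdeal R := hnu
        have hmm := qsum_mul_mem h2m w x
        have hx' : qsum w * qsum x ∈ IsLocalRing.maximalIdeal R :=
          Ideal.mul_mem_left _ _ hx
        have : (1 : R) ∈ IsLocalRing.maximalIdeal R := by
          have heq : (1 : R) = qsum (w * x + 1) - (qsum (w * x) - qsum w * qsum x)
              - qsum w * qsum x := by rw [h1]; ring
          rw [heq]
          exact sub_mem (sub_mem hm hmm) hx'
        exact (IsLocalRing.maximalIdeal.isMaximal R).ne_top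
          (Ideal.eq_top_of_isUnit_mem _ this isUnit_one)
      obtain ⟨v, hv⟩ := hu
      refine ⟨((v⁻¹ : (Quaternion R)ˣ) : Quaternion R), ?_⟩
      rw [Ideal.mem_bot]
      have h1 : ((v⁻¹ : (Quaternion R)ˣ) : Quaternion R) * (w * x + 1) = 1 := by
        rw [← hv]; exact v.inv_mul
      rw [mul_add, mul_one] at h1
      rw [mul_assoc, h1]
      exact sub_self 1
end

section
/- Let R be a finite commutative local ring in which 2 is a zero-divisor. Then an element x = x₁ + x₂i + x₃j + x₄k of the quaternion ring H(R) is a zero-divisor in H(R) if and only if x₁² + x₂² + x₃² + x₄² ∈ J(R), where J(R) is the Jacobson radical of R. -/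
private lemma quat_finite (R : Type*) [CommRing R] [Fintype R] : Finite (Quaternion R) :=
  Finite.of_equiv _ (QuaternionAlgebra.equivProd (-1 : R) 0 (-1)).symm

/-- A quaternion is a unit iff its norm is a unit. -/
private lemma quat_isUnit_iff (R : Type*) [CommRing R] (a : Quaternion R) :
    IsUnit a ↔ IsUnit (Quaternion.normSq a) := by
  constructor
  · intro h
    exact h.map (Quaternion.normSq (R := R))
  · intro h
    obtain ⟨u, hu⟩ := h
    refine ⟨⟨a, ((u⁻¹ : Rˣ) : R) • star a, ?_, ?_⟩, rfl⟩
    · rw [Algebra.mul_smul_comm, Quaternion.self_mul_star, ← hu]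
      rw [← Quaternion.coe_mul_eq_smul, ← Quaternion.coe_mul]
      norm_cast
      simp
    · rw [Algebra.smul_mul_assoc, Quaternion.star_mul_self, ← hu]
      rw [← Quaternion.coe_mul_eq_smul, ← Quaternion.coe_mul]
      norm_cast
      simp

/-- If `R` is a finite commutative local ring in which `2` is a zero-divisor,
then `x = x₁ + x₂i + x₃j + x₄k ∈ H(R)` is a zero-divisor in `H(R)` iff
`x₁² + x₂² + x₃² + x₄² ∈ J(R)`. -/
theorem quaternion_zero_divisor_iff_sum_of_squares_in_jacobson
    (R : Type*) [CommRing R] [Fintype R] [IsLocalRing R]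
    (h2 : ∃ y : R, y ≠ 0 ∧ 2 * y = 0) (x : Quaternion R) :
    (∃ y : Quaternion R, y ≠ 0 ∧ (x * y = 0 ∨ y * x = 0)) ↔
      x.re ^ 2 + x.imI ^ 2 + x.imJ ^ 2 + x.imK ^ 2 ∈ (⊥ : Ideal R).jacobson := by
  have hfin : Finite (Quaternion R) := quat_finite R
  rw [IsLocalRing.jacobson_eq_maximalIdeal ⊥ bot_ne_top, IsLocalRing.mem_maximalIdeal,
    mem_nonunits_iff, ← Quaternion.normSq_def', ← quat_isUnit_iff]
  constructor
  · rintro ⟨y, hy0, hy⟩ hx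
    obtain ⟨u, hu⟩ := hx
    apply hy0
    rcases hy with h | h
    · have := congrArg (fun z => ((u⁻¹ : (Quaternion R)ˣ) : Quaternion R) * z) h
      simpa [← mul_assoc, ← hu] using this
    · have := congrArg (fun z => z * ((u⁻¹ : (Quaternion R)ˣ) : Quaternion R)) h
      simpa [mul_assoc, ← hu] using this
  · intro hx
    by_contra hcon
    push_neg at hcon
    apply hx
    rw [isUnit_iff_mem_nonZeroDivisors_of_finite, mem_nonZeroDivisors_iff]
    refine ⟨fun z hz => Classical.byContradiction fun hz0 => (hcon z hz0).1 hz, fun z hz => ?_⟩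
    by_contra hz0
    exact (hcon z hz0).2 hz
end

section
/- Let k ≥ 2 be an integer and let F be a finite field with 2^r elements for some integer r ≥ 1. Then for any c ∈ F: if c = 0 or c = 1, then 2^r · φ_k(F, c) = (−1)^k · (2^{r+k−1} − 2^k + (2 − 2^r)^k), and otherwise 2^r · φ_k(F, c) = (−1)^k · (−2^k + (2 − 2^r)^k) (equalities of integers). -/
open Finset

/-- Counting function via Finsets. -/
def Ncnt (F : Type*) [Field F] [Fintype F] [DecidableEq F] (k : ℕ) (c : F) : ℕ :=
  (univ.filter (fun x : Fin k → F => (∀ i, x i ≠ 0 ∧ x i ≠ 1) ∧ ∑ i, x i = c)).card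

section Aux

variable {F : Type*} [Field F] [Fintype F] [DecidableEq F]

lemma isExceptionalUnit_iff (u : F) : IsExceptionalUnit u ↔ (u ≠ 0 ∧ u ≠ 1) := by
  unfold IsExceptionalUnit
  rw [isUnit_iff_ne_zero, isUnit_iff_ne_zero, sub_ne_zero]
  exact ⟨fun ⟨h1, h2⟩ => ⟨h1, fun h => h2 h.symm⟩, fun ⟨h1, h2⟩ => ⟨h1, fun h => h2 h.symm⟩⟩

lemma phiEU_eq (k : ℕ) (c : F) : phiEU F k c = Ncnt F k c := by
  unfold phiEU Ncnt
  simp only [isExceptionalUnit_iff]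
  rw [Nat.card_eq_fintype_card, Fintype.card_subtype]

lemma Ncnt_zero (c : F) : Ncnt F 0 c = if c = 0 then 1 else 0 := by
  unfold Ncnt
  rcases eq_or_ne c 0 with rfl | hc
  · rw [if_pos rfl]
    refine Finset.card_eq_one.mpr ⟨fun i => i.elim0, ?_⟩
    ext x
    simp only [mem_filter, mem_univ, true_and, mem_singleton]
    constructor
    · intro _; funext i; exact i.elim0
    · rintro rfl; exact ⟨fun i => i.elim0, by simp⟩
  · rw [if_neg hc, Finset.card_eq_zero]
    ext x
    simp only [mem_filter, mem_univ, true_and, notMem_empty, iff_false, not_and]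
    intro _ h
    exact hc (by simpa using h.symm)

lemma Ncnt_succ (k : ℕ) (c : F) :
    Ncnt F (k+1) c = ∑ a ∈ univ.filter (fun a : F => a ≠ 0 ∧ a ≠ 1), Ncnt F k (c - a) := by
  unfold Ncnt
  rw [Finset.card_eq_sum_card_fiberwise (f := fun y : Fin (k+1) → F => y (Fin.last k))
    (t := univ) (fun x _ => mem_univ _)]
  rw [Finset.sum_filter]
  refine Finset.sum_congr rfl fun a _ => ?_
  by_cases hEa : a ≠ 0 ∧ a ≠ 1
  · rw [if_pos hEa]
    refine Finset.card_bij' (fun y _ => Fin.init y) (fun x _ => Fin.snoc x a) ?_ ?_ ?_ ?_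
    · intro y hy
      simp only [mem_filter, mem_univ, true_and] at hy ⊢
      obtain ⟨⟨h1, h2⟩, h3⟩ := hy
      refine ⟨fun i => h1 i.castSucc, ?_⟩
      show ∑ i : Fin k, y i.castSucc = c - a
      rw [eq_sub_iff_add_eq, ← h3, ← Fin.sum_univ_castSucc]
      exact h2
    · intro x hx
      simp only [mem_filter, mem_univ, true_and] at hx ⊢
      obtain ⟨h1, h2⟩ := hx
      refine ⟨⟨fun i => ?_, ?_⟩, by simp⟩
      · refine Fin.lastCases ?_ ?_ i
        · simpa using hEa
        · intro j; simpa using h1 j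
      · rw [Fin.sum_univ_castSucc]
        simp [h2]
    · intro y hy
      simp only [mem_filter, mem_univ, true_and] at hy
      have := Fin.snoc_init_self y
      rwa [hy.2] at this
    · intro x _
      simp
  · rw [if_neg hEa, Finset.card_eq_zero]
    ext y
    simp only [mem_filter, mem_univ, true_and, notMem_empty, iff_false, not_and]
    rintro ⟨h1, -⟩ h2
    exact hEa (h2 ▸ h1 (Fin.last k))

lemma two_eq_zero' (r : ℕ) (hr : 1 ≤ r) (hF : Fintype.card F = 2 ^ r) : (2 : F) = 0 := by
  have h := FiniteField.cast_card_eq_zero F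
  rw [hF] at h
  push_cast at h
  exact pow_eq_zero_iff (by omega) |>.mp h

lemma cardS (r : ℕ) (hr : 1 ≤ r) (hF : Fintype.card F = 2 ^ r) :
    ((univ.filter (fun a : F => a ≠ 0 ∧ a ≠ 1)).card : ℤ) = 2 ^ r - 2 := by
  have h01 : (0 : F) ≠ 1 := zero_ne_one
  have hset : univ.filter (fun a : F => a ≠ 0 ∧ a ≠ 1) = univ \ ({0, 1} : Finset F) := by
    ext a; simp [not_or]
  rw [hset, Finset.card_sdiff_of_subset (by simp)]
  rw [Finset.card_insert_of_notMem (by simpa using h01), Finset.card_singleton]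
  rw [Finset.card_univ, hF]
  have h2 : 2 ≤ 2 ^ r := by
    calc 2 = 2 ^ 1 := rfl
    _ ≤ 2 ^ r := Nat.pow_le_pow_right (by norm_num) hr
  push_cast [Nat.cast_sub h2]
  ring

lemma key (r : ℕ) (hr : 1 ≤ r) (hF : Fintype.card F = 2 ^ r) :
    ∀ k, 1 ≤ k → ∀ c : F, (2 ^ r : ℤ) * (Ncnt F k c : ℤ) =
      (2 ^ r - 2) ^ k + (-2) ^ k * (if c = 0 ∨ c = 1 then 2 ^ (r - 1) - 1 else -1) := by
  obtain ⟨s, rfl⟩ : ∃ s, r = s + 1 := ⟨r - 1, by omega⟩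
  simp only [Nat.add_sub_cancel]
  have h2 : (2 : F) = 0 := two_eq_zero' (s+1) hr hF
  have hS := cardS (s+1) hr hF
  intro k hk
  induction k, hk using Nat.le_induction with
  | base =>
    intro c
    have h1 : Ncnt F 1 c = if c ≠ 0 ∧ c ≠ 1 then 1 else 0 := by
      rw [Ncnt_succ, Finset.sum_congr rfl (fun a _ => Ncnt_zero (c - a))]
      simp only [sub_eq_zero]
      rw [Finset.sum_ite_eq (univ.filter (fun a : F => a ≠ 0 ∧ a ≠ 1)) c (fun _ => 1)]
      simp
    rw [h1]
    by_cases hc : c = 0 ∨ c = 1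
    · rw [if_neg (by tauto), if_pos hc]
      push_cast
      ring
    · rw [if_pos (by tauto), if_neg hc]
      push_cast
      ring
  | succ k hk ih =>
    intro c
    rw [Ncnt_succ]
    push_cast
    rw [Finset.mul_sum]
    rw [Finset.sum_congr rfl (fun a _ => ih (c - a))]
    have hsplit : ∀ a : F, ((if c - a = 0 ∨ c - a = 1 then (2:ℤ) ^ s - 1 else -1))
        = (if a = c ∨ a = c - 1 then (2:ℤ) ^ s - 1 else -1) := by
      intro a
      refine if_congr ?_ rfl rfl
      constructor
      · rintro (h | h)
        · left; linear_combination -h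
        · right; linear_combination -h
      · rintro (h | h)
        · left; linear_combination -h
        · right; linear_combination -h
    rw [Finset.sum_congr rfl (fun a _ => by rw [hsplit a])]
    rw [Finset.sum_add_distrib, Finset.sum_const, ← Finset.mul_sum, nsmul_eq_mul]
    have hneg1 : (-1 : F) = 1 := by linear_combination -h2
    by_cases hc : c = 0 ∨ c = 1
    · rw [if_pos hc]
      have hall : ∀ a ∈ univ.filter (fun a : F => a ≠ 0 ∧ a ≠ 1),
          (if a = c ∨ a = c - 1 then (2:ℤ) ^ s - 1 else -1) = -1 := by
        intro a ha
        simp only [mem_filter, mem_univ, true_and] at ha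
        rw [if_neg]
        rintro (rfl | rfl)
        · exact absurd hc (by tauto)
        · rcases hc with rfl | rfl
          · exact ha.2 (by rw [zero_sub, hneg1])
          · exact ha.1 (by rw [sub_self])
      rw [Finset.sum_congr rfl hall, Finset.sum_const, nsmul_eq_mul, hS]
      ring
    · rw [if_neg hc]
      push_neg at hc
      have hc1 : c - 1 ≠ 0 := sub_ne_zero.mpr hc.2
      have hc2 : c - 1 ≠ 1 := by
        intro h
        apply hc.1
        have : c = 2 := by linear_combination h
        rw [this, h2]
      have hcc : c ≠ c - 1 := by
        intro h
        have : (1 : F) = 0 := by linear_combination h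
        exact one_ne_zero this
      have hfilt : (univ.filter (fun a : F => a ≠ 0 ∧ a ≠ 1)).filter
          (fun a => a = c ∨ a = c - 1) = {c, c - 1} := by
        ext a
        simp only [Finset.filter_filter, mem_filter, mem_univ, true_and, mem_insert,
          mem_singleton]
        constructor
        · tauto
        · rintro (rfl | rfl)
          · exact ⟨⟨hc.1, hc.2⟩, Or.inl rfl⟩
          · exact ⟨⟨hc1, hc2⟩, Or.inr rfl⟩
      have hcard2 : ({c, c - 1} : Finset F).card = 2 := by
        rw [Finset.card_insert_of_notMem (by simpa using hcc), Finset.card_singleton]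
      have htot := Finset.card_filter_add_card_filter_not
        (s := univ.filter (fun a : F => a ≠ 0 ∧ a ≠ 1)) (fun a : F => a = c ∨ a = c - 1)
      rw [hfilt, hcard2] at htot
      have hm : (((univ.filter (fun a : F => a ≠ 0 ∧ a ≠ 1)).filter
          (fun a => ¬(a = c ∨ a = c - 1))).card : ℤ) = 2 ^ (s+1) - 4 := by
        have := congrArg (fun n : ℕ => (n : ℤ)) htot
        push_cast at this
        rw [hS] at this
        linarith
      rw [Finset.sum_ite (fun _ => (2:ℤ) ^ s - 1) (fun _ => (-1 : ℤ))]
      rw [hfilt, Finset.sum_const, Finset.sum_const, hcard2, nsmul_eq_mul, nsmul_eq_mul, hm, hS]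
      push_cast
      ring

end Aux

/-- For a finite field `F` with `2^r` elements and `k ≥ 2`:
`2^r · φ_k(F, c) = (−1)^k (2^{r+k−1} − 2^k + (2 − 2^r)^k)` if `c = 0` or `c = 1`,
and `2^r · φ_k(F, c) = (−1)^k (−2^k + (2 − 2^r)^k)` otherwise. -/
theorem phi_k_of_char_two_field
    (k r : ℕ) (hk : 2 ≤ k) (hr : 1 ≤ r)
    (F : Type*) [Field F] [Fintype F] (hF : Fintype.card F = 2 ^ r) (c : F) :
    ((c = 0 ∨ c = 1) →
      (2 ^ r : ℤ) * (phiEU F k c : ℤ) =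
        (-1) ^ k * (2 ^ (r + k - 1) - 2 ^ k + (2 - 2 ^ r) ^ k)) ∧
    (¬ (c = 0 ∨ c = 1) →
      (2 ^ r : ℤ) * (phiEU F k c : ℤ) =
        (-1) ^ k * (-(2 ^ k) + (2 - 2 ^ r) ^ k)) := by
  classical
  obtain ⟨s, rfl⟩ : ∃ s, r = s + 1 := ⟨r - 1, by omega⟩
  have hkey := key (s+1) hr hF k (by omega) c
  simp only [Nat.add_sub_cancel] at hkey
  have hpow : ((2:ℤ) - 2 ^ (s+1)) ^ k = (-1) ^ k * (2 ^ (s+1) - 2) ^ k := by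
    rw [← neg_sub, neg_pow]
  have h2k : ((-2 : ℤ)) ^ k = (-1) ^ k * 2 ^ k := by
    rw [show (-2 : ℤ) = -1 * 2 by norm_num, mul_pow]
  have hu : ((-1 : ℤ)) ^ k * (-1) ^ k = 1 := by
    rw [← pow_add]
    exact Even.neg_one_pow ⟨k, rfl⟩
  constructor
  · intro hc
    rw [phiEU_eq, hkey, if_pos hc]
    rw [show s + 1 + k - 1 = s + k by omega, hpow, h2k, pow_add]
    linear_combination (-((2:ℤ) ^ (s+1) - 2) ^ k) * hu
  · intro hc
    rw [phiEU_eq, hkey, if_neg hc]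
    rw [hpow, h2k]
    linear_combination (-((2:ℤ) ^ (s+1) - 2) ^ k) * hu
end

section
/- Let F be a finite field of odd order q with q ≥ 9. Then for every matrix C ∈ M₂(F), φ₂(M₂(F), C) ≥ q⁴ − 8q³. -/
lemma phiEU_two_eq {R : Type*} [Ring R] (C : R) :
    phiEU R 2 C = Nat.card {X : R // IsExceptionalUnit X ∧ IsExceptionalUnit (C - X)} := by
  apply Nat.card_congr
  refine ⟨fun x => ⟨x.1 0, ?_⟩, fun X => ⟨![X.1, C - X.1], ?_⟩, ?_, ?_⟩
  · obtain ⟨h1, h2⟩ := x.2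
    rw [Fin.sum_univ_two] at h2
    refine ⟨h1 0, ?_⟩
    have : C - x.1 0 = x.1 1 := sub_eq_iff_eq_add'.mpr h2.symm
    rw [this]; exact h1 1
  · obtain ⟨h1, h2⟩ := X.2
    refine ⟨fun i => ?_, by simp [Fin.sum_univ_two]⟩
    fin_cases i <;> simpa
  · rintro ⟨x, hx1, hx2⟩
    rw [Fin.sum_univ_two] at hx2
    apply Subtype.ext
    funext i
    fin_cases i
    · rfl
    · show C - x 0 = x 1
      exact sub_eq_iff_eq_add'.mpr hx2.symm
  · rintro ⟨X, hX⟩; rfl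



open Finset
open scoped Classical

section
variable {F : Type*} [Field F] [Fintype F]

local notation "M₂" => Matrix (Fin 2) (Fin 2) F

-- card of shifted non-unit set
lemma shift_card (e : M₂ ≃ M₂) :
    (univ.filter fun X : M₂ => ¬ IsUnit (e X)).card =
    (univ.filter fun X : M₂ => ¬ IsUnit X).card := by
  classical
  apply Finset.card_bij' (fun X _ => e X) (fun Y _ => e.symm Y)
  · intro a ha; simp at ha ⊢; exact ha
  · intro a ha; simp at ha ⊢; exact ha
  · intro a _; simp
  · intro a _; simp

lemma card_units_eq : (Finset.univ.filter fun X : M₂ => IsUnit X).card =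
    Nat.card (GL (Fin 2) F) := by
  classical
  rw [Nat.card_eq_fintype_card, ← Fintype.card_subtype]
  exact Fintype.card_congr
    ⟨fun X => X.2.unit, fun u => ⟨u, u.isUnit⟩, fun X => Subtype.ext rfl,
      fun u => Units.ext rfl⟩

lemma card_M₂ : Fintype.card (Matrix (Fin 2) (Fin 2) F) = Fintype.card F ^ 4 := by
  classical
  show Fintype.card (Fin 2 → Fin 2 → F) = _
  simp [Fintype.card_fun]
  ring

end

set_option maxHeartbeats 1000000 in
theorem phi_two_lower_bound_in_matrix_ring'
    (F : Type*) [Field F] [Fintype F] (q : ℕ) (hq : Fintype.card F = q)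
    (hodd : Odd q) (h9 : 9 ≤ q) (C : Matrix (Fin 2) (Fin 2) F) :
    (q : ℤ) ^ 4 - 8 * (q : ℤ) ^ 3 ≤
      ((Finset.univ.filter fun X : Matrix (Fin 2) (Fin 2) F =>
        IsExceptionalUnit X ∧ IsExceptionalUnit (C - X)).card : ℤ) := by
  classical
  set p : Matrix (Fin 2) (Fin 2) F → Prop := fun X => IsExceptionalUnit X ∧ IsExceptionalUnit (C - X)
    with hp
  set N : ℕ := (univ.filter fun X : Matrix (Fin 2) (Fin 2) F => ¬ IsUnit X).card with hN
  set b : (Matrix (Fin 2) (Fin 2) F ≃ Matrix (Fin 2) (Fin 2) F) → Finset (Matrix (Fin 2) (Fin 2) F) := fun e => univ.filter fun X => ¬ IsUnit (e X) with hb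
  have hbcard : ∀ e : Matrix (Fin 2) (Fin 2) F ≃ Matrix (Fin 2) (Fin 2) F, (b e).card = N := fun e => shift_card e
  -- split
  have hsplit : (univ.filter p).card + (univ.filter fun X => ¬ p X).card = Fintype.card (Matrix (Fin 2) (Fin 2) F) :=
    Finset.card_filter_add_card_filter_not (p := p)
  -- subset
  have hsubset : (univ.filter fun X => ¬ p X) ⊆
      b (Equiv.refl (Matrix (Fin 2) (Fin 2) F)) ∪ b (Equiv.subLeft 1) ∪ b (Equiv.subLeft C) ∪ b (Equiv.addLeft (1 - C)) := by
    intro X hX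
    simp only [hb, mem_filter, mem_univ, true_and, mem_union, Equiv.refl_apply,
      Equiv.subLeft_apply, Equiv.coe_addLeft] at hX ⊢
    have h1 : (1 : Matrix (Fin 2) (Fin 2) F) - (C - X) = 1 - C + X := by abel
    simp only [hp, IsExceptionalUnit, not_and_or, h1] at hX
    rcases hX with (h | h) | h | h
    · exact Or.inl (Or.inl (Or.inl (Finset.mem_filter.mpr ⟨mem_univ _, h⟩)))
    · exact Or.inl (Or.inl (Or.inr h))
    · exact Or.inl (Or.inr h)
    · exact Or.inr (Finset.mem_filter.mpr ⟨mem_univ _, h⟩)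
  have hbad : (univ.filter fun X => ¬ p X).card ≤ 4 * N := by
    calc (univ.filter fun X => ¬ p X).card
        ≤ (b (Equiv.refl (Matrix (Fin 2) (Fin 2) F)) ∪ b (Equiv.subLeft 1) ∪ b (Equiv.subLeft C)
            ∪ b (Equiv.addLeft (1 - C))).card := Finset.card_le_card hsubset
      _ ≤ N + N + N + N := by
          refine le_trans (Finset.card_union_le _ _) ?_
          refine add_le_add (le_trans (Finset.card_union_le _ _) ?_) (hbcard _).le
          refine add_le_add (le_trans (Finset.card_union_le _ _) ?_) (hbcard _).le
          exact add_le_add (hbcard _).le (hbcard _).le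
      _ = 4 * N := by ring
  -- count nonunits
  have hNU : N + Nat.card (GL (Fin 2) F) = q ^ 4 := by
    have h := Finset.card_filter_add_card_filter_not
      (s := (univ : Finset (Matrix (Fin 2) (Fin 2) F))) (p := fun X : Matrix (Fin 2) (Fin 2) F => IsUnit X)
    rw [Finset.card_univ, card_M₂, hq] at h
    rw [← card_units_eq]
    omega
  have hGL : (Nat.card (GL (Fin 2) F) : ℤ) = ((q : ℤ) ^ 2 - 1) * ((q : ℤ) ^ 2 - q) := by
    rw [Matrix.card_GL_field, hq, Fin.prod_univ_two]
    have h1 : 1 ≤ q ^ 2 := Nat.one_le_pow _ _ (by omega)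
    have h2 : q ≤ q ^ 2 := Nat.le_self_pow (by norm_num) _
    simp only [Fin.val_zero, Fin.val_one, pow_zero, pow_one]
    rw [Nat.cast_mul, Nat.cast_sub h1, Nat.cast_sub h2]
    push_cast
    ring
  have hcardM : Fintype.card (Matrix (Fin 2) (Fin 2) F) = q ^ 4 := by rw [card_M₂, hq]
  have hq1 : (1 : ℤ) ≤ (q : ℤ) := by exact_mod_cast (by omega : 1 ≤ q)
  have hNint : (N : ℤ) = (q : ℤ) ^ 4 - ((q : ℤ) ^ 2 - 1) * ((q : ℤ) ^ 2 - q) := by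
    have := congrArg (Nat.cast : ℕ → ℤ) hNU
    push_cast at this
    linarith [hGL]
  have hsplit' : ((univ.filter p).card : ℤ) + ((univ.filter fun X => ¬ p X).card : ℤ)
      = (q : ℤ) ^ 4 := by exact_mod_cast (hsplit.trans hcardM)
  have hbad' : ((univ.filter fun X => ¬ p X).card : ℤ) ≤ 4 * (N : ℤ) := by exact_mod_cast hbad
  have hq23 : (q : ℤ) ^ 2 ≤ (q : ℤ) ^ 3 := by nlinarith
  have hq12 : (q : ℤ) ≤ (q : ℤ) ^ 2 := by nlinarith
  have hgoal : (q : ℤ) ^ 4 - 8 * (q : ℤ) ^ 3 ≤ ((univ.filter p).card : ℤ) := by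
    nlinarith
  simpa only [hp] using hgoal



/-- For a finite field `F` of odd order `q ≥ 9` and any `C ∈ M₂(F)`,
`φ₂(M₂(F), C) ≥ q⁴ − 8q³`. -/
theorem phi_two_lower_bound_in_matrix_ring
    (F : Type*) [Field F] [Fintype F] (q : ℕ) (hq : Fintype.card F = q)
    (hodd : Odd q) (h9 : 9 ≤ q) (C : Matrix (Fin 2) (Fin 2) F) :
    (q : ℤ) ^ 4 - 8 * (q : ℤ) ^ 3 ≤ (phiEU (Matrix (Fin 2) (Fin 2) F) 2 C : ℤ) := by
  classical
  rw [phiEU_two_eq, Nat.card_eq_fintype_card, Fintype.card_subtype]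
  exact phi_two_lower_bound_in_matrix_ring' F q hq hodd h9 C
end

section
/- Let F be a finite field of odd order q. Then φ₂(M₂(F), 0) = q⁴ − 3q³ + 6q. -/
namespace PhiAux

open Finset

lemma phiEU_two_zero (R : Type*) [Ring R] :
    phiEU R 2 0 = Nat.card {u : R // IsUnit u ∧ IsUnit (1 - u) ∧ IsUnit (1 + u)} := by
  apply Nat.card_congr
  refine ⟨fun x => ⟨x.1 0, ?_⟩, fun u => ⟨![u.1, -u.1], ?_⟩, ?_, ?_⟩
  · obtain ⟨hEU, hsum⟩ := x.2
    rw [Fin.sum_univ_two] at hsum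
    have h1 : x.1 1 = -(x.1 0) := eq_neg_of_add_eq_zero_right hsum
    refine ⟨(hEU 0).1, (hEU 0).2, ?_⟩
    have := (hEU 1).2
    rw [h1, sub_neg_eq_add] at this
    exact this
  · obtain ⟨h1, h2, h3⟩ := u.2
    constructor
    · intro i
      fin_cases i
      · exact ⟨h1, h2⟩
      · refine ⟨?_, ?_⟩
        · show IsUnit (-(u:R)); exact h1.neg
        · show IsUnit (1 - -(u:R)); rw [sub_neg_eq_add]; exact h3
    · rw [Fin.sum_univ_two]
      simp
  · intro x
    apply Subtype.ext
    funext i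
    obtain ⟨hEU, hsum⟩ := x.2
    rw [Fin.sum_univ_two] at hsum
    fin_cases i
    · rfl
    · show -(x.1 0) = x.1 1
      exact (eq_neg_of_add_eq_zero_right hsum).symm
  · intro u; rfl

variable {F : Type*} [Field F] [Fintype F] [DecidableEq F]

/-- the set of "excluded" values for `b*c` -/
def S (a d : F) : Finset F := {a * d, (1 - a) * (1 - d), (1 + a) * (1 + d)}

/-- number of pairs with product `v` -/
def n (v : F) : ℕ := (univ.filter fun p : F × F => p.1 * p.2 = v).card

def g (a d : F) : ℕ := (univ.filter fun bc : F × F => bc.1 * bc.2 ∉ S a d).card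

def b (a d : F) : ℕ := ∑ v ∈ S a d, n v

lemma n_card (v : F) :
    n v + 1 = Fintype.card F + (if v = 0 then Fintype.card F else 0) := by
  unfold n
  rcases eq_or_ne v 0 with rfl | hv
  · rw [if_pos rfl]
    have h1 : (univ.filter fun p : F × F => p.1 * p.2 = 0)
        = (univ.filter fun p : F × F => p.1 = 0 ∨ p.2 = 0) := by
      apply filter_congr; intro p _; simp [mul_eq_zero]
    rw [h1, filter_or]
    have h2 := Finset.card_union_add_card_inter
      (univ.filter fun p : F × F => p.1 = 0) (univ.filter fun p : F × F => p.2 = 0)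
    have hA : (univ.filter fun p : F × F => p.1 = 0) = ({(0:F)} : Finset F) ×ˢ univ := by
      ext p; simp [Finset.mem_product, Prod.ext_iff, eq_comm]
    have hB : (univ.filter fun p : F × F => p.2 = 0) = univ ×ˢ ({(0:F)} : Finset F) := by
      ext p; simp [Finset.mem_product, Prod.ext_iff, eq_comm]
    have hI : ((univ.filter fun p : F × F => p.1 = 0) ∩ (univ.filter fun p : F × F => p.2 = 0))
        = {((0:F), (0:F))} := by
      ext p; simp [Prod.ext_iff]
    rw [hI, hA, hB] at h2
    rw [Finset.card_product, Finset.card_product, Finset.card_singleton,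
      Finset.card_singleton, Finset.card_univ] at h2
    rw [hA, hB]
    omega
  · rw [if_neg hv]
    have h : (univ.filter fun p : F × F => p.1 * p.2 = v).card
        = ((univ : Finset F).erase 0).card := by
      apply Finset.card_nbij' (i := Prod.fst) (j := fun a => (a, a⁻¹ * v))
      · intro p hp
        simp only [mem_coe, mem_filter, mem_univ, true_and] at hp
        simp only [mem_coe, mem_erase, mem_univ, and_true]
        intro h0; exact hv (by rw [← hp, h0, zero_mul])
      · intro a ha
        simp only [mem_coe, mem_erase, mem_univ, and_true] at ha
        simp only [mem_coe, mem_filter, mem_univ, true_and]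
        field_simp
      · intro p hp
        simp only [mem_coe, mem_filter, mem_univ, true_and] at hp
        have h1 : p.1 ≠ 0 := fun h0 => hv (by rw [← hp, h0, zero_mul])
        have h2 : p.1⁻¹ * v = p.2 := by rw [← hp]; field_simp
        exact Prod.ext rfl h2
      · intro a _; rfl
    rw [h, Finset.card_erase_of_mem (mem_univ 0), Finset.card_univ]
    have : 1 ≤ Fintype.card F := Fintype.card_pos
    omega

lemma pair_sum_card (c : F) :
    (univ.filter fun p : F × F => p.1 + p.2 = c).card = Fintype.card F := by
  rw [← Finset.card_univ]
  apply Finset.card_nbij' (i := Prod.fst) (j := fun a => (a, c - a))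
  · intro p _; exact mem_univ _
  · intro a _; simp
  · intro p hp
    simp only [mem_coe, mem_filter, mem_univ, true_and] at hp
    exact Prod.ext rfl (by rw [← hp]; ring)
  · intro a _; rfl

lemma mem3_card (h2 : (2:F) ≠ 0) :
    (univ.filter fun p : F × F => p.1 + p.2 = 0 ∨ p.1 + p.2 = 1 ∨ p.1 + p.2 = -1).card
      = 3 * Fintype.card F := by
  have h01 : (0:F) ≠ 1 := zero_ne_one
  have h0m : (0:F) ≠ -1 := by intro h; exact one_ne_zero (neg_eq_zero.mp h.symm)
  have h1m : (1:F) ≠ -1 := by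
    intro h; apply h2; linear_combination h
  rw [filter_or, filter_or]
  rw [Finset.card_union_of_disjoint, Finset.card_union_of_disjoint]
  · rw [pair_sum_card, pair_sum_card, pair_sum_card]; ring
  · rw [Finset.disjoint_left]; intro p hp hq
    simp only [mem_filter, mem_univ, true_and] at hp hq
    exact h1m (hp ▸ hq)
  · rw [Finset.disjoint_left]; intro p hp hq
    simp only [mem_filter, mem_univ, true_and, mem_union] at hp hq
    rcases hq with hq | hq
    · exact h01 (hp ▸ hq)
    · exact h0m (hp ▸ hq)

lemma elem3_card (h2 : (2:F) ≠ 0) :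
    (univ.filter fun a : F => a = 0 ∨ a = 1 ∨ a = -1).card = 3 := by
  have h01 : (0:F) ≠ 1 := zero_ne_one
  have h0m : (0:F) ≠ -1 := by intro h; exact one_ne_zero (neg_eq_zero.mp h.symm)
  have h1m : (1:F) ≠ -1 := by intro h; apply h2; linear_combination h
  have : (univ.filter fun a : F => a = 0 ∨ a = 1 ∨ a = -1) = ({0, 1, -1} : Finset F) := by
    ext a; simp
  rw [this]
  rw [Finset.card_insert_of_notMem (by simp [h01, h0m]),
    Finset.card_insert_of_notMem (by simp [h1m]), Finset.card_singleton]

lemma card_prod_filter {α β : Type*} [Fintype α] [Fintype β] [DecidableEq α]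
    (Q : α × β → Prop) [DecidablePred Q] :
    (univ.filter Q).card = ∑ a : α, (univ.filter fun b : β => Q (a, b)).card := by
  rw [Finset.card_eq_sum_card_fiberwise (f := Prod.fst) (t := univ) (fun _ _ => mem_univ _)]
  refine Finset.sum_congr rfl fun a _ => ?_
  apply Finset.card_nbij' (i := Prod.snd) (j := fun b => (a, b))
  · intro p hp
    simp only [mem_coe, mem_filter, mem_univ, true_and] at hp ⊢
    obtain ⟨hQ, h1⟩ := hp
    rwa [← h1, Prod.mk.eta]
  · intro b hb
    simp only [mem_coe, mem_filter, mem_univ, true_and] at hb ⊢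
    exact ⟨hb, trivial⟩
  · intro p hp
    simp only [mem_coe, mem_filter, mem_univ, true_and] at hp
    exact Prod.ext hp.2.symm rfl
  · intro b _; rfl

lemma fiber_sum (T : Finset F) :
    (univ.filter fun p : F × F => p.1 * p.2 ∈ T).card
      = ∑ v ∈ T, (univ.filter fun p : F × F => p.1 * p.2 = v).card := by
  rw [Finset.card_eq_sum_card_fiberwise (f := fun p : F × F => p.1 * p.2) (t := T)
    (fun p hp => by simpa using hp)]
  refine Finset.sum_congr rfl fun v hv => ?_
  congr 1
  rw [Finset.filter_filter]
  apply filter_congr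
  intro p _
  constructor
  · rintro ⟨_, h⟩; exact h
  · intro h; exact ⟨h ▸ hv, h⟩

lemma S_card (h2 : (2:F) ≠ 0) (a d : F) :
    (S a d).card + (if a + d = 0 ∨ a + d = 1 ∨ a + d = -1 then 1 else 0) = 3 := by
  unfold S
  set x := a * d with hx
  set y := (1 - a) * (1 - d) with hy
  set z := (1 + a) * (1 + d) with hz
  have hxy : x = y ↔ a + d = 1 := by
    constructor <;> intro h <;> linear_combination h
  have hxz : x = z ↔ a + d = -1 := by
    constructor <;> intro h <;> linear_combination -h
  have hyz : y = z ↔ a + d = 0 := by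
    constructor <;> intro h
    · have : (2:F) * (a + d) = 0 := by linear_combination -h
      rcases mul_eq_zero.mp this with h' | h'
      · exact absurd h' h2
      · exact h'
    · linear_combination -2 * h
  have h01 : (0:F) ≠ 1 := zero_ne_one
  have h0m : (0:F) ≠ -1 := by intro h; exact one_ne_zero (neg_eq_zero.mp h.symm)
  have h1m : (1:F) ≠ -1 := by intro h; apply h2; linear_combination h
  by_cases ht0 : a + d = 0
  · rw [if_pos (Or.inl ht0)]
    have hyz' : y = z := hyz.mpr ht0
    have hxy' : x ≠ y := fun h => h01 (ht0.symm.trans (hxy.mp h))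
    rw [show ({x, y, z} : Finset F) = {x, y} by rw [← hyz', Finset.pair_eq_singleton]]
    rw [Finset.card_insert_of_notMem (by simpa using hxy'), Finset.card_singleton]
  · by_cases ht1 : a + d = 1
    · rw [if_pos (Or.inr (Or.inl ht1))]
      have hxy' : x = y := hxy.mpr ht1
      have hxz' : x ≠ z := fun h => h1m (ht1.symm.trans (hxz.mp h))
      rw [show ({x, y, z} : Finset F) = {x, z} by rw [← hxy', Finset.insert_idem]]
      rw [Finset.card_insert_of_notMem (by simpa using hxz'), Finset.card_singleton]
    · by_cases htm : a + d = -1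
      · rw [if_pos (Or.inr (Or.inr htm))]
        have hxz' : x = z := hxz.mpr htm
        have hxy' : x ≠ y := fun h => ht1 (hxy.mp h)
        rw [show ({x, y, z} : Finset F) = {y, x} by
          rw [← hxz', Finset.insert_comm, Finset.pair_eq_singleton]]
        rw [Finset.card_insert_of_notMem (by simpa using hxy'.symm), Finset.card_singleton]
      · rw [if_neg (by tauto)]
        have hxy' : x ≠ y := fun h => ht1 (hxy.mp h)
        have hxz' : x ≠ z := fun h => htm (hxz.mp h)
        have hyz' : y ≠ z := fun h => ht0 (hyz.mp h)
        rw [Finset.card_insert_of_notMem (by simp [hxy', hxz']),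
          Finset.card_insert_of_notMem (by simp [hyz']), Finset.card_singleton]

lemma zero_mem_S (a d : F) :
    ((0:F) ∈ S a d)
      ↔ ¬(¬(a = 0 ∨ a = 1 ∨ a = -1) ∧ ¬(d = 0 ∨ d = 1 ∨ d = -1)) := by
  unfold S
  simp only [Finset.mem_insert, Finset.mem_singleton]
  constructor
  · rintro (h | h | h)
    · rcases mul_eq_zero.mp h.symm with h' | h' <;> tauto
    · rcases mul_eq_zero.mp h.symm with h' | h'
      · exact fun hc => hc.1 (Or.inr (Or.inl (by linear_combination -h')))
      · exact fun hc => hc.2 (Or.inr (Or.inl (by linear_combination -h')))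
    · rcases mul_eq_zero.mp h.symm with h' | h'
      · exact fun hc => hc.1 (Or.inr (Or.inr (by linear_combination h')))
      · exact fun hc => hc.2 (Or.inr (Or.inr (by linear_combination h')))
  · intro h
    rw [not_and_or, not_not, not_not] at h
    rcases h with (h | h | h) | (h | h | h)
    · exact Or.inl (by rw [h, zero_mul])
    · exact Or.inr (Or.inl (by rw [h]; ring))
    · exact Or.inr (Or.inr (by rw [h]; ring))
    · exact Or.inl (by rw [h, mul_zero])
    · exact Or.inr (Or.inl (by rw [h]; ring))
    · exact Or.inr (Or.inr (by rw [h]; ring))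

lemma g_add_b (a d : F) : g a d + b a d = Fintype.card F * Fintype.card F := by
  have hcompl := Finset.card_filter_add_card_filter_not
    (s := (univ : Finset (F × F))) (p := fun bc : F × F => bc.1 * bc.2 ∈ S a d)
  rw [fiber_sum, Finset.card_univ, Fintype.card_prod] at hcompl
  unfold g b n
  omega

lemma b_card (a d : F) : b a d + (S a d).card
    = (S a d).card * Fintype.card F + (if (0:F) ∈ S a d then Fintype.card F else 0) := by
  have h1 : ∑ v ∈ S a d, (n v + 1)
      = ∑ v ∈ S a d, (Fintype.card F + if v = 0 then Fintype.card F else 0) :=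
    Finset.sum_congr rfl fun v _ => n_card v
  rw [Finset.sum_add_distrib, Finset.sum_const, Finset.sum_add_distrib,
    Finset.sum_const] at h1
  have h2 : (∑ v ∈ S a d, if v = 0 then Fintype.card F else 0)
      = (if (0:F) ∈ S a d then Fintype.card F else 0) :=
    Finset.sum_ite_eq' (S a d) 0 (fun _ => Fintype.card F)
  rw [h2] at h1
  unfold b
  simp only [smul_eq_mul, mul_one] at h1
  omega

lemma main_count (h2 : (2:F) ≠ 0) :
    ((univ.filter fun p : (F × F) × (F × F) =>
        p.2.1 * p.2.2 ∉ S p.1.1 p.1.2).card : ℤ)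
      = (Fintype.card F : ℤ) ^ 4 - 3 * (Fintype.card F : ℤ) ^ 3
        + 6 * (Fintype.card F : ℤ) := by
  have step1 : (univ.filter fun p : (F × F) × (F × F) =>
      p.2.1 * p.2.2 ∉ S p.1.1 p.1.2).card = ∑ ad : F × F, g ad.1 ad.2 := by
    rw [card_prod_filter]
    exact Finset.sum_congr rfl fun ad _ => rfl
  -- global sums in ℕ
  have hgb : (∑ ad : F × F, g ad.1 ad.2) + (∑ ad : F × F, b ad.1 ad.2)
      = (Fintype.card F * Fintype.card F) * (Fintype.card F * Fintype.card F) := by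
    rw [← Finset.sum_add_distrib,
      Finset.sum_congr rfl (fun (ad : F × F) _ => g_add_b ad.1 ad.2),
      Finset.sum_const, Finset.card_univ, Fintype.card_prod, smul_eq_mul]
  have hbs : (∑ ad : F × F, b ad.1 ad.2) + (∑ ad : F × F, (S ad.1 ad.2).card)
      = (∑ ad : F × F, (S ad.1 ad.2).card) * Fintype.card F
        + (univ.filter fun ad : F × F => (0:F) ∈ S ad.1 ad.2).card * Fintype.card F := by
    have h1 : ∑ ad : F × F, (b ad.1 ad.2 + (S ad.1 ad.2).card)
        = ∑ ad : F × F, ((S ad.1 ad.2).card * Fintype.card F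
            + (if (0:F) ∈ S ad.1 ad.2 then Fintype.card F else 0)) :=
      Finset.sum_congr rfl fun ad _ => b_card ad.1 ad.2
    rw [Finset.sum_add_distrib, Finset.sum_add_distrib, ← Finset.sum_mul] at h1
    have h3 : (∑ ad : F × F, if (0:F) ∈ S ad.1 ad.2 then Fintype.card F else 0)
        = (univ.filter fun ad : F × F => (0:F) ∈ S ad.1 ad.2).card * Fintype.card F := by
      rw [Finset.sum_ite, Finset.sum_const, Finset.sum_const_zero, add_zero, smul_eq_mul]
    rw [h3] at h1
    exact h1
  have hss : (∑ ad : F × F, (S ad.1 ad.2).card)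
      + (univ.filter fun ad : F × F =>
          ad.1 + ad.2 = 0 ∨ ad.1 + ad.2 = 1 ∨ ad.1 + ad.2 = -1).card
      = (Fintype.card F * Fintype.card F) * 3 := by
    have h1 : ∑ ad : F × F, ((S ad.1 ad.2).card
        + (if ad.1 + ad.2 = 0 ∨ ad.1 + ad.2 = 1 ∨ ad.1 + ad.2 = -1 then 1 else 0))
        = ∑ _ad : F × F, 3 :=
      Finset.sum_congr rfl fun ad _ => S_card h2 ad.1 ad.2
    rw [Finset.sum_add_distrib, Finset.sum_const, Finset.card_univ, Fintype.card_prod,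
      smul_eq_mul, ← Finset.card_filter] at h1
    exact h1
  have hcp : (univ.filter fun ad : F × F =>
      ad.1 + ad.2 = 0 ∨ ad.1 + ad.2 = 1 ∨ ad.1 + ad.2 = -1).card = 3 * Fintype.card F :=
    mem3_card h2
  have hZw : (univ.filter fun ad : F × F => (0:F) ∈ S ad.1 ad.2).card
      + (univ.filter fun a : F => ¬(a = 0 ∨ a = 1 ∨ a = -1)).card
        * (univ.filter fun a : F => ¬(a = 0 ∨ a = 1 ∨ a = -1)).card
      = Fintype.card F * Fintype.card F := by
    have hcompl := Finset.card_filter_add_card_filter_not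
      (s := (univ : Finset (F × F))) (p := fun ad : F × F => (0:F) ∈ S ad.1 ad.2)
    have hneg : (univ.filter fun ad : F × F => ¬((0:F) ∈ S ad.1 ad.2))
        = univ.filter (fun ad : F × F =>
          (¬(ad.1 = 0 ∨ ad.1 = 1 ∨ ad.1 = -1)) ∧ (¬(ad.2 = 0 ∨ ad.2 = 1 ∨ ad.2 = -1))) := by
      apply filter_congr; intro ad _
      rw [zero_mem_S, not_not]
    have hprod : (univ.filter (fun ad : F × F =>
          (¬(ad.1 = 0 ∨ ad.1 = 1 ∨ ad.1 = -1)) ∧ (¬(ad.2 = 0 ∨ ad.2 = 1 ∨ ad.2 = -1)))).card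
        = (univ.filter fun a : F => ¬(a = 0 ∨ a = 1 ∨ a = -1)).card
          * (univ.filter fun a : F => ¬(a = 0 ∨ a = 1 ∨ a = -1)).card := by
      rw [← Finset.univ_product_univ,
        Finset.filter_product (fun a : F => ¬(a = 0 ∨ a = 1 ∨ a = -1))
          (fun a : F => ¬(a = 0 ∨ a = 1 ∨ a = -1)), Finset.card_product]
    rw [hneg, hprod, Finset.card_univ, Fintype.card_prod] at hcompl
    exact hcompl
  have hw3 : (univ.filter fun a : F => ¬(a = 0 ∨ a = 1 ∨ a = -1)).card + 3
      = Fintype.card F := by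
    have hcompl := Finset.card_filter_add_card_filter_not
      (s := (univ : Finset F)) (p := fun a : F => a = 0 ∨ a = 1 ∨ a = -1)
    rw [elem3_card h2, Finset.card_univ] at hcompl
    omega
  -- pass to the integers
  rw [step1]
  have e1 : ((∑ ad : F × F, g ad.1 ad.2 : ℕ) : ℤ) + ((∑ ad : F × F, b ad.1 ad.2 : ℕ) : ℤ)
      = ((Fintype.card F : ℤ) * (Fintype.card F : ℤ))
        * ((Fintype.card F : ℤ) * (Fintype.card F : ℤ)) := by exact_mod_cast hgb
  have e2 : ((∑ ad : F × F, b ad.1 ad.2 : ℕ) : ℤ)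
        + ((∑ ad : F × F, (S ad.1 ad.2).card : ℕ) : ℤ)
      = ((∑ ad : F × F, (S ad.1 ad.2).card : ℕ) : ℤ) * (Fintype.card F : ℤ)
        + (((univ.filter fun ad : F × F => (0:F) ∈ S ad.1 ad.2).card : ℕ) : ℤ)
          * (Fintype.card F : ℤ) := by exact_mod_cast hbs
  have e3 : ((∑ ad : F × F, (S ad.1 ad.2).card : ℕ) : ℤ) + 3 * (Fintype.card F : ℤ)
      = ((Fintype.card F : ℤ) * (Fintype.card F : ℤ)) * 3 := by
    have h := hss; rw [hcp] at h; exact_mod_cast h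
  have e5 : (((univ.filter fun ad : F × F => (0:F) ∈ S ad.1 ad.2).card : ℕ) : ℤ)
        + (((univ.filter fun a : F => ¬(a = 0 ∨ a = 1 ∨ a = -1)).card : ℕ) : ℤ)
          * (((univ.filter fun a : F => ¬(a = 0 ∨ a = 1 ∨ a = -1)).card : ℕ) : ℤ)
      = (Fintype.card F : ℤ) * (Fintype.card F : ℤ) := by exact_mod_cast hZw
  have e6 : (((univ.filter fun a : F => ¬(a = 0 ∨ a = 1 ∨ a = -1)).card : ℕ) : ℤ) + 3
      = (Fintype.card F : ℤ) := by exact_mod_cast hw3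
  set q : ℤ := (Fintype.card F : ℤ) with hqdef
  set C : ℤ := ((∑ ad : F × F, g ad.1 ad.2 : ℕ) : ℤ) with hC
  set B : ℤ := ((∑ ad : F × F, b ad.1 ad.2 : ℕ) : ℤ) with hB
  set SS : ℤ := ((∑ ad : F × F, (S ad.1 ad.2).card : ℕ) : ℤ) with hSS
  set Z : ℤ := (((univ.filter fun ad : F × F => (0:F) ∈ S ad.1 ad.2).card : ℕ) : ℤ) with hZd
  set w : ℤ := (((univ.filter fun a : F => ¬(a = 0 ∨ a = 1 ∨ a = -1)).card : ℕ) : ℤ) with hwd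
  linear_combination e1 - e2 + (1 - q) * e3 - q * e5 + q * (w + q - 3) * e6

end PhiAux

/-- For a finite field `F` of odd order `q`,
`φ₂(M₂(F), 0) = q⁴ − 3q³ + 6q`. -/
theorem phi_two_of_zero_matrix
    (F : Type*) [Field F] [Fintype F] (q : ℕ) (hq : Fintype.card F = q) (hodd : Odd q) :
    (phiEU (Matrix (Fin 2) (Fin 2) F) 2 0 : ℤ) =
      (q : ℤ) ^ 4 - 3 * (q : ℤ) ^ 3 + 6 * (q : ℤ) := by
  haveI : DecidableEq F := Classical.decEq F
  have hchar : ringChar F ≠ 2 := by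
    intro h
    have := (FiniteField.even_card_iff_char_two (F := F)).mp h
    rw [hq] at this
    rcases hodd with ⟨k, hk⟩
    omega
  have h2 : (2:F) ≠ 0 := Ring.two_ne_zero hchar
  -- the matrix/entries equivalence
  let e : Matrix (Fin 2) (Fin 2) F ≃ (F × F) × (F × F) :=
    { toFun := fun A => ((A 0 0, A 1 1), (A 0 1, A 1 0))
      invFun := fun p => !![p.1.1, p.2.1; p.2.2, p.1.2]
      left_inv := fun A => by ext i j; fin_cases i <;> fin_cases j <;> simp
      right_inv := fun p => by simp }
  have key : ∀ A : Matrix (Fin 2) (Fin 2) F,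
      (IsUnit A ∧ IsUnit (1 - A) ∧ IsUnit (1 + A)) ↔
        (e A).2.1 * (e A).2.2 ∉ PhiAux.S (e A).1.1 (e A).1.2 := by
    intro A
    have d1 : Matrix.det A = A 0 0 * A 1 1 - A 0 1 * A 1 0 := Matrix.det_fin_two A
    have d2 : Matrix.det (1 - A) = (1 - A 0 0) * (1 - A 1 1) - A 0 1 * A 1 0 := by
      simp [Matrix.det_fin_two, Matrix.sub_apply, Matrix.one_apply]
    have d3 : Matrix.det (1 + A) = (1 + A 0 0) * (1 + A 1 1) - A 0 1 * A 1 0 := by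
      simp [Matrix.det_fin_two, Matrix.add_apply, Matrix.one_apply]
    rw [Matrix.isUnit_iff_isUnit_det, Matrix.isUnit_iff_isUnit_det,
      Matrix.isUnit_iff_isUnit_det, isUnit_iff_ne_zero, isUnit_iff_ne_zero,
      isUnit_iff_ne_zero, d1, d2, d3]
    show _ ↔ A 0 1 * A 1 0 ∉ PhiAux.S (A 0 0) (A 1 1)
    unfold PhiAux.S
    simp only [Finset.mem_insert, Finset.mem_singleton, not_or]
    constructor
    · rintro ⟨h1', h2', h3'⟩
      exact ⟨fun h => h1' (by rw [h]; ring), fun h => h2' (by rw [h]; ring),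
        fun h => h3' (by rw [h]; ring)⟩
    · rintro ⟨h1', h2', h3'⟩
      exact ⟨fun h => h1' (by linear_combination -h), fun h => h2' (by linear_combination -h),
        fun h => h3' (by linear_combination -h)⟩
  have hcount : phiEU (Matrix (Fin 2) (Fin 2) F) 2 0
      = (Finset.univ.filter fun p : (F × F) × (F × F) =>
          p.2.1 * p.2.2 ∉ PhiAux.S p.1.1 p.1.2).card := by
    rw [PhiAux.phiEU_two_zero]
    rw [Nat.card_congr (Equiv.subtypeEquiv
      (q := fun p : (F × F) × (F × F) => p.2.1 * p.2.2 ∉ PhiAux.S p.1.1 p.1.2) e key)]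
    rw [Nat.card_eq_fintype_card, Fintype.card_subtype]
  rw [hcount, ← hq]
  exact_mod_cast PhiAux.main_count h2
end

section
/- Let F be a finite field of odd order q and let I be the identity matrix in M₂(F). Then φ₂(M₂(F), I) = q⁴ − 2q³ − q² + 3q. -/
open Finset
open scoped Classical

set_option linter.unusedSectionVars false

section aux
variable {F : Type*} [Field F] [Fintype F]


/-- number of pairs with given product -/
lemma card_mul_eq_pairs (u : F) :
    Fintype.card {p : F × F // p.1 * p.2 = u} =
      if u = 0 then 2 * Fintype.card F - 1 else Fintype.card F - 1 := by
  classical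
  split_ifs with hu
  · subst hu
    rw [Fintype.card_subtype]
    have h1 : (univ.filter (fun p : F × F => p.1 * p.2 = 0))
        = (univ.filter (fun p : F × F => p.1 = 0)) ∪ (univ.filter (fun p : F × F => p.2 = 0)) := by
      ext p; simp [mul_eq_zero]
    rw [h1]
    have h2 := Finset.card_union_add_card_inter (univ.filter (fun p : F × F => p.1 = 0))
      (univ.filter (fun p : F × F => p.2 = 0))
    have h3 : (univ.filter (fun p : F × F => p.1 = 0)) ∩ (univ.filter (fun p : F × F => p.2 = 0))
        = {(0, 0)} := by
      ext p; simp [Prod.ext_iff]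
    have h4 : #(univ.filter (fun p : F × F => p.1 = 0)) = Fintype.card F := by
      rw [← Fintype.card_subtype]
      exact Fintype.card_congr ⟨fun p => p.1.2, fun x => ⟨(0, x), rfl⟩,
        fun p => by ext <;> simp [p.2.symm], fun x => rfl⟩
    have h5 : #(univ.filter (fun p : F × F => p.2 = 0)) = Fintype.card F := by
      rw [← Fintype.card_subtype]
      exact Fintype.card_congr ⟨fun p => p.1.1, fun x => ⟨(x, 0), rfl⟩,
        fun p => by ext <;> simp [p.2.symm], fun x => rfl⟩
    rw [h3, h4, h5] at h2
    simp at h2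
    omega
  · have e : {x : F // x ≠ 0} ≃ {p : F × F // p.1 * p.2 = u} := by
      refine ⟨fun x => ⟨(x.1, x.1⁻¹ * u), by
        have := x.2; field_simp⟩, fun p => ⟨p.1.1, by
        intro h; apply hu; rw [← p.2, h, zero_mul]⟩, fun x => by ext; rfl, fun p => by
        ext
        · rfl
        · show (p.1.1)⁻¹ * u = p.1.2
          have h1 : p.1.1 ≠ 0 := by intro h; apply hu; rw [← p.2, h, zero_mul]
          rw [inv_mul_eq_iff_eq_mul₀ h1]
          exact p.2.symm⟩
    rw [← Fintype.card_congr e, ← Fintype.card_congr (unitsEquivNeZero (G₀ := F)),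
      Fintype.card_units]

lemma card_a_one_sub_a : Fintype.card {a : F // a * (1 - a) = 0} = 2 := by
  classical
  rw [Fintype.card_subtype]
  have h1 : (univ.filter (fun a : F => a * (1 - a) = 0)) = {0, 1} := by
    ext a
    simp [mul_eq_zero, sub_eq_zero]
    constructor
    · rintro (h | h); exacts [Or.inl h, Or.inr h.symm]
    · rintro (h | h); exacts [Or.inl h, Or.inr h.symm]
  rw [h1]
  simp [Finset.card_insert_of_notMem]


lemma card_prod_subtype {α β : Type*} [Fintype α] [Fintype β] (P : α → β → Prop) :
    Fintype.card {x : α × β // P x.1 x.2} = ∑ a : α, Fintype.card {b : β // P a b} := by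
  rw [Fintype.card_congr (Equiv.subtypeProdEquivSigmaSubtype P), Fintype.card_sigma]

lemma cast_f (u : F) :
    (Fintype.card {p : F × F // p.1 * p.2 = u} : ℤ) =
      (Fintype.card F - 1) + if u = 0 then (Fintype.card F : ℤ) else 0 := by
  have hq : 1 ≤ Fintype.card F := Fintype.card_pos
  rw [card_mul_eq_pairs]
  split_ifs
  · rw [Nat.cast_sub (by omega)]; push_cast; ring
  · rw [Nat.cast_sub (by omega)]; push_cast; ring

lemma sum_ind {α : Type*} [Fintype α] (P : α → Prop) (c : ℤ) :
    ∑ a : α, (if P a then c else 0) = (Fintype.card {a : α // P a} : ℤ) * c := by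
  classical
  rw [Fintype.card_subtype, ← Finset.sum_filter, Finset.sum_const, nsmul_eq_mul]

lemma EU_card_s1 :
    (Fintype.card {x : (F × F) × (F × F) // x.2.1 * x.2.2 = x.1.1 * x.1.2} : ℤ) =
      (Fintype.card F : ℤ)^3 + (Fintype.card F : ℤ)^2 - Fintype.card F := by
  rw [card_prod_subtype (fun a b : F × F => b.1 * b.2 = a.1 * a.2)]
  push_cast
  have : ∀ a : F × F, (Fintype.card {b : F × F // b.1 * b.2 = a.1 * a.2} : ℤ) =
      ((Fintype.card F : ℤ) - 1) + if a.1 * a.2 = 0 then (Fintype.card F : ℤ) else 0 :=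
    fun a => cast_f _
  rw [Finset.sum_congr rfl (fun a _ => this a), Finset.sum_add_distrib, Finset.sum_const,
    sum_ind, card_mul_eq_pairs (0 : F)]
  have hq : 1 ≤ Fintype.card F := Fintype.card_pos
  simp only [if_true, Finset.card_univ, Fintype.card_prod, nsmul_eq_mul]
  rw [Nat.cast_sub (by omega)]
  push_cast
  ring

lemma EU_card_s2 :
    (Fintype.card {x : (F × F) × (F × F) //
        x.2.1 * x.2.2 = (1 - x.1.1) * (1 - x.1.2)} : ℤ) =
      (Fintype.card F : ℤ)^3 + (Fintype.card F : ℤ)^2 - Fintype.card F := by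
  rw [← EU_card_s1]
  congr 1
  apply Fintype.card_congr
  exact Equiv.subtypeEquiv
    (Equiv.prodCongr (Equiv.prodCongr (Equiv.subLeft (1 : F)) (Equiv.subLeft 1)) (Equiv.refl _))
    (fun x => by simp [Equiv.subLeft])

lemma EU_card_inter :
    (Fintype.card {x : (F × F) × (F × F) //
        x.2.1 * x.2.2 = x.1.1 * x.1.2 ∧
        x.2.1 * x.2.2 = (1 - x.1.1) * (1 - x.1.2)} : ℤ) =
      (Fintype.card F : ℤ)^2 + Fintype.card F := by
  set q : ℤ := (Fintype.card F : ℤ) with hqdef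
  have hiff : ∀ x : (F × F) × (F × F),
      (x.2.1 * x.2.2 = x.1.1 * x.1.2 ∧ x.2.1 * x.2.2 = (1 - x.1.1) * (1 - x.1.2)) ↔
      (x.1.2 = 1 - x.1.1 ∧ x.2.1 * x.2.2 = x.1.1 * x.1.2) := by
    rintro ⟨⟨a, d⟩, b, c⟩
    simp only [Prod.fst, Prod.snd]
    constructor
    · rintro ⟨h1, h2⟩
      have h3 : a * d = (1 - a) * (1 - d) := h1 ▸ h2
      exact ⟨by linear_combination h3, h1⟩
    · rintro ⟨h1, h2⟩
      subst h1
      exact ⟨h2, by linear_combination h2⟩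
  rw [Fintype.card_congr ((Equiv.subtypeEquivRight hiff).trans
    (Equiv.subtypeProdEquivSigmaSubtype
      (fun a b : F × F => a.2 = 1 - a.1 ∧ b.1 * b.2 = a.1 * a.2))), Fintype.card_sigma]
  push_cast
  have key : ∀ a : F × F, (Fintype.card {b : F × F // a.2 = 1 - a.1 ∧ b.1 * b.2 = a.1 * a.2} : ℤ)
      = if a.2 = 1 - a.1 then ((q - 1) + if a.1 * a.2 = 0 then q else 0) else 0 := by
    intro a
    by_cases h : a.2 = 1 - a.1
    · rw [if_pos h, ← cast_f (a.1 * a.2)]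
      congr 1
      exact Fintype.card_congr (Equiv.subtypeEquivRight (fun b => by simp [h]))
    · rw [if_neg h]
      norm_cast
      rw [Fintype.card_eq_zero_iff]
      exact ⟨fun b => h b.2.1⟩
  rw [Finset.sum_congr rfl (fun a _ => key a), Fintype.sum_prod_type]
  have inner : ∀ a1 : F,
      (∑ a2 : F, if a2 = 1 - a1 then ((q - 1) + if a1 * a2 = 0 then q else 0) else 0)
      = (q - 1) + if a1 * (1 - a1) = 0 then q else 0 := by
    intro a1
    rw [Finset.sum_ite_eq' univ (1 - a1) (fun a2 => (q - 1) + if a1 * a2 = 0 then q else 0)]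
    simp
  rw [Finset.sum_congr rfl (fun a1 _ => inner a1), Finset.sum_add_distrib, Finset.sum_const,
    sum_ind (fun a1 : F => a1 * (1 - a1) = 0) q, card_a_one_sub_a]
  simp only [Finset.card_univ]
  push_cast
  ring



lemma card_main :
    (Fintype.card {x : (F × F) × (F × F) //
        ¬(x.2.1 * x.2.2 = x.1.1 * x.1.2) ∧
        ¬(x.2.1 * x.2.2 = (1 - x.1.1) * (1 - x.1.2))} : ℤ) =
      (Fintype.card F : ℤ)^4 - 2 * (Fintype.card F : ℤ)^3
        - (Fintype.card F : ℤ)^2 + 3 * (Fintype.card F : ℤ) := by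
  set q : ℤ := (Fintype.card F : ℤ) with hqdef
  set s : Finset ((F × F) × (F × F)) :=
    univ.filter (fun x => x.2.1 * x.2.2 = x.1.1 * x.1.2) with hs
  set t : Finset ((F × F) × (F × F)) :=
    univ.filter (fun x => x.2.1 * x.2.2 = (1 - x.1.1) * (1 - x.1.2)) with ht
  have hfilter : univ.filter (fun x : (F × F) × (F × F) =>
      ¬(x.2.1 * x.2.2 = x.1.1 * x.1.2) ∧
      ¬(x.2.1 * x.2.2 = (1 - x.1.1) * (1 - x.1.2))) = (s ∪ t)ᶜ := by
    ext x; simp [hs, ht]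
  have hcs : (#s : ℤ) = q^3 + q^2 - q := by
    rw [hs, ← Fintype.card_subtype]; exact EU_card_s1
  have hct : (#t : ℤ) = q^3 + q^2 - q := by
    rw [ht, ← Fintype.card_subtype]; exact EU_card_s2
  have hst : s ∩ t = univ.filter (fun x : (F × F) × (F × F) =>
      x.2.1 * x.2.2 = x.1.1 * x.1.2 ∧ x.2.1 * x.2.2 = (1 - x.1.1) * (1 - x.1.2)) := by
    rw [Finset.filter_and]
  have hcst : (#(s ∩ t) : ℤ) = q^2 + q := by
    rw [hst, ← Fintype.card_subtype]; exact EU_card_inter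
  have hunion := Finset.card_union_add_card_inter s t
  have hle : #(s ∪ t) ≤ Fintype.card ((F × F) × (F × F)) := Finset.card_le_univ _
  have hcard : (Fintype.card ((F × F) × (F × F)) : ℤ) = q^4 := by
    simp [Fintype.card_prod, hqdef]; ring
  rw [Fintype.card_subtype, hfilter, Finset.card_compl]
  rw [Nat.cast_sub hle, hcard]
  have : (#(s ∪ t) : ℤ) = (#s : ℤ) + #t - #(s ∩ t) := by
    have := congrArg (Nat.cast : ℕ → ℤ) hunion
    push_cast at this
    linarith
  rw [this, hcs, hct, hcst]
  ring

section ring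
variable {R : Type*} [Ring R]

def E1 : {x : Fin 2 → R // (∀ i, IsExceptionalUnit (x i)) ∧ ∑ i, x i = 1}
    ≃ {A : R // IsUnit A ∧ IsUnit (1 - A)} where
  toFun x := ⟨x.1 0, (x.2.1 0).1, (x.2.1 0).2⟩
  invFun A := ⟨![A.1, 1 - A.1], ⟨fun i => by
      fin_cases i
      · exact ⟨A.2.1, A.2.2⟩
      · refine ⟨A.2.2, ?_⟩
        simpa using A.2.1,
    by simp [Fin.sum_univ_two]⟩⟩
  left_inv x := by
    apply Subtype.ext
    funext i
    have hs : x.1 0 + x.1 1 = 1 := by simpa [Fin.sum_univ_two] using x.2.2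
    fin_cases i
    · rfl
    · show 1 - x.1 0 = x.1 1
      exact sub_eq_iff_eq_add'.mpr hs.symm
  right_inv A := Subtype.ext rfl

end ring

def mE : Matrix (Fin 2) (Fin 2) F ≃ (F × F) × (F × F) where
  toFun A := ((A 0 0, A 1 1), (A 0 1, A 1 0))
  invFun p := !![p.1.1, p.2.1; p.2.2, p.1.2]
  left_inv A := by ext i j; fin_cases i <;> fin_cases j <;> simp
  right_inv p := by simp

lemma unit_iff (A : Matrix (Fin 2) (Fin 2) F) :
    (IsUnit A ∧ IsUnit (1 - A)) ↔
      (¬(A 0 1 * A 1 0 = A 0 0 * A 1 1) ∧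
       ¬(A 0 1 * A 1 0 = (1 - A 0 0) * (1 - A 1 1))) := by
  have h1 : IsUnit A ↔ A.det ≠ 0 := by
    rw [Matrix.isUnit_iff_isUnit_det, isUnit_iff_ne_zero]
  have h2 : IsUnit (1 - A) ↔ (1 - A).det ≠ 0 := by
    rw [Matrix.isUnit_iff_isUnit_det, isUnit_iff_ne_zero]
  have hdet1 : A.det = A 0 0 * A 1 1 - A 0 1 * A 1 0 := Matrix.det_fin_two A
  have hdet2 : (1 - A).det = (1 - A 0 0) * (1 - A 1 1) - A 0 1 * A 1 0 := by
    rw [Matrix.det_fin_two]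
    simp [Matrix.sub_apply, Matrix.one_apply]
  rw [h1, h2, hdet1, hdet2, sub_ne_zero, sub_ne_zero]
  exact and_congr (ne_comm) (ne_comm)

lemma final_eq :
    (Nat.card {x : Fin 2 → Matrix (Fin 2) (Fin 2) F //
        (∀ i, IsExceptionalUnit (x i)) ∧ ∑ i, x i = 1} : ℤ) =
      (Fintype.card F : ℤ)^4 - 2 * (Fintype.card F : ℤ)^3
        - (Fintype.card F : ℤ)^2 + 3 * (Fintype.card F : ℤ) := by
  rw [Nat.card_congr (E1.trans (Equiv.subtypeEquiv
    (q := fun x : (F × F) × (F × F) => ¬(x.2.1 * x.2.2 = x.1.1 * x.1.2) ∧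
      ¬(x.2.1 * x.2.2 = (1 - x.1.1) * (1 - x.1.2)))
    mE (fun A => unit_iff A)))]
  rw [Nat.card_eq_fintype_card]
  exact card_main

end aux

/-- For a finite field `F` of odd order `q`,
`φ₂(M₂(F), I) = q⁴ − 2q³ − q² + 3q`. -/
theorem phi_two_of_identity_matrix
    (F : Type*) [Field F] [Fintype F] (q : ℕ) (hq : Fintype.card F = q) (hodd : Odd q) :
    (phiEU (Matrix (Fin 2) (Fin 2) F) 2 (1 : Matrix (Fin 2) (Fin 2) F) : ℤ) =
      (q : ℤ) ^ 4 - 2 * (q : ℤ) ^ 3 - (q : ℤ) ^ 2 + 3 * (q : ℤ) := by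
  have h := final_eq (F := F)
  rw [hq] at h
  unfold phiEU
  exact h
end

section
/- Let F be a finite field of odd order q and let C ∈ M₂(F) be an idempotent matrix of rank one (i.e., C² = C, C ≠ 0, and C ≠ I). Then φ₂(M₂(F), C) = q⁴ − 4q³ + 5q² − 4q + 4. -/
open Finset

section Aux

lemma card_filter_prodEU {α β : Type*} [Fintype α] [Fintype β] (P : α × β → Prop) [DecidablePred P] :
    (univ.filter P).card = ∑ a : α, (univ.filter (fun b => P (a, b))).card := by
  rw [card_filter, ← univ_product_univ, sum_product]
  exact sum_congr rfl fun a _ => (card_filter _ _).symm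

variable {F : Type*} [Field F] [Fintype F] [DecidableEq F]

lemma card_filter_prod {α β : Type*} [Fintype α] [Fintype β] (P : α × β → Prop) [DecidablePred P] :
    (univ.filter P).card = ∑ a : α, (univ.filter (fun b => P (a, b))).card := by
  rw [card_filter, ← univ_product_univ, sum_product]
  exact sum_congr rfl fun a _ => (card_filter _ _).symm

lemma card_filter_ne_sum {α : Type*} [Fintype α] [DecidableEq α] (b : α) :
    (univ.filter (fun a : α => ¬ a = b)).card = Fintype.card α - 1 := by
  have : (univ.filter (fun a : α => ¬ a = b)) = univ.erase b := by
    ext a; simp [Finset.mem_erase, and_comm]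
  rw [this, card_erase_of_mem (mem_univ b), card_univ]

lemma hyperbola_card (v : F) :
    (univ.filter (fun p : F × F => p.1 * p.2 = v)).card
      = (Fintype.card F - 1) + (if v = 0 then Fintype.card F else 0) := by
  have hq1 : 1 ≤ Fintype.card F := Fintype.card_pos
  rw [card_filter_prod]
  by_cases hv : v = 0
  · subst hv
    have h : ∀ a : F, (univ.filter (fun b => a * b = 0)).card
        = if a = 0 then Fintype.card F else 1 := by
      intro a
      by_cases ha : a = 0
      · simp [ha]
      · rw [if_neg ha]
        have : (univ.filter (fun b => a * b = 0)) = {0} := by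
          ext b; simp [ha, mul_eq_zero]
        rw [this, card_singleton]
    rw [sum_congr rfl (fun a _ => h a)]
    have h2 : ∀ a : F, (if a = 0 then Fintype.card F else 1)
        = (if a = 0 then Fintype.card F - 1 else 0) + 1 := by
      intro a; split <;> omega
    rw [sum_congr rfl (fun a _ => h2 a), sum_add_distrib, sum_const, card_univ,
      Finset.sum_ite_eq' univ (0 : F) (fun _ => Fintype.card F - 1)]
    simp
  · rw [if_neg hv, add_zero]
    have h : ∀ a : F, (univ.filter (fun b => a * b = v)).card
        = if ¬ a = 0 then 1 else 0 := by
      intro a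
      by_cases ha : a = 0
      · simp [ha, eq_comm, hv]
      · rw [if_pos ha]
        have : (univ.filter (fun b => a * b = v)) = {a⁻¹ * v} := by
          ext b
          simp only [mem_filter, mem_univ, true_and, mem_singleton]
          rw [eq_comm, eq_inv_mul_iff_mul_eq₀ ha, eq_comm, mul_comm]
        rw [this, card_singleton]
    rw [sum_congr rfl (fun a _ => h a), ← card_filter, card_filter_ne_sum]


lemma card_filter_not_mem_mul (T : Finset F) :
    (univ.filter (fun p : F × F => p.1 * p.2 ∉ T)).card
      = (univ \ T).card * (Fintype.card F - 1) + (if 0 ∈ T then 0 else Fintype.card F) := by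
  rw [Finset.card_eq_sum_card_fiberwise (f := fun p : F × F => p.1 * p.2) (t := univ \ T)
    (fun p hp => by simp only [mem_coe, mem_filter] at hp; simp [hp.2])]
  have h1 : ∀ v ∈ univ \ T,
      ((univ.filter (fun p : F × F => p.1 * p.2 ∉ T)).filter (fun p => p.1 * p.2 = v)).card
        = (Fintype.card F - 1) + (if v = 0 then Fintype.card F else 0) := by
    intro v hv
    rw [filter_filter]
    rw [show (univ.filter (fun p : F × F => p.1 * p.2 ∉ T ∧ p.1 * p.2 = v))
        = (univ.filter (fun p : F × F => p.1 * p.2 = v)) from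
      filter_congr (fun p _ => by
        simp only [mem_sdiff] at hv
        constructor
        · exact fun h => h.2
        · exact fun h => ⟨h ▸ hv.2, h⟩)]
    exact hyperbola_card v
  rw [sum_congr rfl h1, sum_add_distrib, sum_const, smul_eq_mul]
  congr 1
  rw [Finset.sum_ite_eq' (univ \ T) (0 : F) (fun _ => Fintype.card F)]
  simp [mem_sdiff]


lemma c_claim (t a : F) :
    (univ.filter (fun d : F => ¬(t = 0 ∨ t = d ∨ t = -a ∨ t = a + d - 1))).card
      = if t = 0 ∨ a = -t then 0
        else Fintype.card F - (if a = 1 then 1 else 2) := by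
  by_cases h0 : t = 0 ∨ a = -t
  · rw [if_pos h0, card_eq_zero, filter_eq_empty_iff]
    intro d _
    rw [not_not]
    rcases h0 with h | h
    · exact Or.inl h
    · exact Or.inr (Or.inr (Or.inl (by rw [h, neg_neg])))
  · rw [if_neg h0]
    push_neg at h0
    obtain ⟨ht, ha⟩ := h0
    have key : ∀ d : F, (¬(t = 0 ∨ t = d ∨ t = -a ∨ t = a + d - 1)) ↔ ¬(d = t ∨ d = t + 1 - a) := by
      intro d
      apply not_congr
      constructor
      · rintro (h | h | h | h)
        · exact absurd h ht
        · exact Or.inl h.symm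
        · exact absurd (by rw [h, neg_neg]) ha
        · exact Or.inr (by linear_combination -h)
      · rintro (h | h)
        · exact Or.inr (Or.inl h.symm)
        · exact Or.inr (Or.inr (Or.inr (by linear_combination -h)))
    rw [filter_congr (fun d _ => key d)]
    have hset : (univ.filter (fun d : F => ¬(d = t ∨ d = t + 1 - a)))
        = univ \ ({t, t + 1 - a} : Finset F) := by
      ext d
      simp [mem_sdiff, not_or]
    rw [hset, card_sdiff_of_subset (subset_univ _), card_univ]
    congr 1
    by_cases ha1 : a = 1
    · subst ha1
      rw [if_pos rfl]
      simp
    · rw [if_neg ha1, card_insert_of_notMem, card_singleton]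
      rw [mem_singleton]
      intro h
      exact ha1 (by linear_combination h)


lemma a_sum (t : F) (ht : t ≠ 0) :
    ∑ a : F, (if t = 0 ∨ a = -t then 0 else Fintype.card F - (if a = 1 then 1 else 2))
      = if t = -1 then (Fintype.card F - 1) * (Fintype.card F - 2)
        else (Fintype.card F - 1) + (Fintype.card F - 2) * (Fintype.card F - 2) := by
  set q := Fintype.card F with hqdef
  have hg : ∀ a : F, (if t = 0 ∨ a = -t then 0 else q - (if a = 1 then 1 else 2))
      = (if a = -t then 0 else q - (if a = 1 then 1 else 2)) := by
    intro a; simp [ht]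
  rw [sum_congr rfl (fun a _ => hg a)]
  rw [← Finset.sum_erase_add univ _ (mem_univ (-t)), if_pos rfl, add_zero]
  rw [sum_congr rfl (fun a ha => if_neg (Finset.mem_erase.mp ha).1)]
  by_cases h1 : t = -1
  · rw [if_pos h1]
    have : ∀ a ∈ univ.erase (-t), q - (if a = 1 then 1 else 2) = q - 2 := by
      intro a ha
      rw [if_neg]
      intro h; subst h
      exact (Finset.mem_erase.mp ha).1 (by rw [h1, neg_neg])
    rw [sum_congr rfl this, sum_const, card_erase_of_mem (mem_univ _), card_univ, smul_eq_mul]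
  · rw [if_neg h1]
    have h1m : (1 : F) ∈ univ.erase (-t) := by
      rw [Finset.mem_erase]
      exact ⟨fun h => h1 (by linear_combination h), mem_univ _⟩
    rw [← Finset.sum_erase_add _ _ h1m, if_pos rfl]
    have : ∀ a ∈ (univ.erase (-t)).erase 1, q - (if a = 1 then 1 else 2) = q - 2 := by
      intro a ha
      rw [if_neg (Finset.mem_erase.mp ha).1]
    rw [sum_congr rfl this, sum_const, smul_eq_mul,
      card_erase_of_mem h1m, card_erase_of_mem (mem_univ _), card_univ]
    have h2 : Fintype.card F - 1 - 1 = q - 2 := by omega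
    rw [h2]
    ring


lemma sum_card_S :
    ∑ ad : F × F, (univ \ ({0, ad.2, -ad.1, ad.1 + ad.2 - 1} : Finset F)).card
      = (Fintype.card F - 2)
          * ((Fintype.card F - 1) + (Fintype.card F - 2) * (Fintype.card F - 2))
        + (Fintype.card F - 1) * (Fintype.card F - 2) := by
  set q := Fintype.card F with hq
  have h1 : ∀ a d : F, (univ \ ({0, d, -a, a + d - 1} : Finset F)).card
      = ∑ t : F, if ¬(t = 0 ∨ t = d ∨ t = -a ∨ t = a + d - 1) then 1 else 0 := by
    intro a d
    rw [← card_filter]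
    congr 1
    ext x
    simp [mem_sdiff, not_or]
  rw [Fintype.sum_prod_type]
  calc ∑ a : F, ∑ d : F, (univ \ ({0, d, -a, a + d - 1} : Finset F)).card
      = ∑ a : F, ∑ d : F, ∑ t : F,
          (if ¬(t = 0 ∨ t = d ∨ t = -a ∨ t = a + d - 1) then 1 else 0) :=
        sum_congr rfl (fun a _ => sum_congr rfl (fun d _ => h1 a d))
    _ = ∑ a : F, ∑ t : F, ∑ d : F,
          (if ¬(t = 0 ∨ t = d ∨ t = -a ∨ t = a + d - 1) then 1 else 0) :=
        sum_congr rfl (fun a _ => Finset.sum_comm)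
    _ = ∑ t : F, ∑ a : F, ∑ d : F,
          (if ¬(t = 0 ∨ t = d ∨ t = -a ∨ t = a + d - 1) then 1 else 0) := Finset.sum_comm
    _ = ∑ t : F, ∑ a : F,
          (if t = 0 ∨ a = -t then 0 else q - (if a = 1 then 1 else 2)) := by
        refine sum_congr rfl (fun t _ => sum_congr rfl (fun a _ => ?_))
        rw [← card_filter, c_claim]
    _ = ∑ t : F, (if t = 0 then 0
          else if t = -1 then (q - 1) * (q - 2) else (q - 1) + (q - 2) * (q - 2)) := by
        refine sum_congr rfl (fun t _ => ?_)
        by_cases ht : t = 0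
        · simp [ht]
        · rw [if_neg ht, a_sum t ht]
    _ = (q - 2) * ((q - 1) + (q - 2) * (q - 2)) + (q - 1) * (q - 2) := by
        rw [← Finset.sum_erase_add univ _ (mem_univ (0 : F)), if_pos rfl, add_zero]
        have hcongr : ∀ t ∈ univ.erase (0 : F),
            (if t = 0 then 0
              else if t = -1 then (q - 1) * (q - 2) else (q - 1) + (q - 2) * (q - 2))
            = (if t = -1 then (q - 1) * (q - 2) else (q - 1) + (q - 2) * (q - 2)) := by
          intro t ht
          rw [if_neg (Finset.mem_erase.mp ht).1]
        rw [sum_congr rfl hcongr]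
        have hm : (-1 : F) ∈ univ.erase (0 : F) :=
          Finset.mem_erase.mpr ⟨neg_ne_zero.mpr one_ne_zero, mem_univ _⟩
        rw [← Finset.sum_erase_add _ _ hm, if_pos rfl]
        congr 1
        have hcongr2 : ∀ t ∈ (univ.erase (0 : F)).erase (-1),
            (if t = -1 then (q - 1) * (q - 2) else (q - 1) + (q - 2) * (q - 2))
            = ((q - 1) + (q - 2) * (q - 2)) := by
          intro t ht
          rw [if_neg (Finset.mem_erase.mp ht).1]
        rw [sum_congr rfl hcongr2, sum_const, smul_eq_mul,
          card_erase_of_mem hm, card_erase_of_mem (mem_univ _), card_univ,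
          show Fintype.card F - 1 - 1 = q - 2 by omega]


lemma card_T (a d : F) :
    (univ \ ({a * d, a * d - d, a * d + a, (a - 1) * (d - 1)} : Finset F)).card
      = (univ \ ({0, d, -a, a + d - 1} : Finset F)).card := by
  have himg : ({a * d, a * d - d, a * d + a, (a - 1) * (d - 1)} : Finset F)
      = ({0, d, -a, a + d - 1} : Finset F).image (fun s => a * d - s) := by
    rw [image_insert, image_insert, image_insert, image_singleton, sub_zero, sub_neg_eq_add,
      show a * d - (a + d - 1) = (a - 1) * (d - 1) from by ring]
  rw [card_sdiff_of_subset (subset_univ _), card_sdiff_of_subset (subset_univ _), himg,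
    Finset.card_image_of_injective _ sub_right_injective]

lemma not_mem_T_iff (a d : F) :
    ((0 : F) ∉ ({a * d, a * d - d, a * d + a, (a - 1) * (d - 1)} : Finset F))
      ↔ ((¬ a = 0 ∧ ¬ a = 1) ∧ (¬ d = 0 ∧ ¬ d = 1 ∧ ¬ d = -1)) := by
  simp only [mem_insert, mem_singleton, not_or]
  constructor
  · rintro ⟨h1, h2, h3, h4⟩
    exact ⟨⟨fun ha => h1 (by rw [ha, zero_mul]),
        fun ha => h4 (by rw [ha]; ring)⟩,
      fun hd => h1 (by rw [hd, mul_zero]),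
      fun hd => h4 (by rw [hd]; ring),
      fun hd => h3 (by rw [hd]; ring)⟩
  · rintro ⟨⟨ha0, ha1⟩, hd0, hd1, hdm⟩
    refine ⟨fun h => mul_ne_zero ha0 hd0 h.symm, fun h => ?_, fun h => ?_, fun h => ?_⟩
    · rcases mul_eq_zero.mp (show d * (a - 1) = 0 from by linear_combination -h) with h' | h'
      · exact hd0 h'
      · exact ha1 (by linear_combination h')
    · rcases mul_eq_zero.mp (show a * (d + 1) = 0 from by linear_combination -h) with h' | h'
      · exact ha0 h'
      · exact hdm (by linear_combination h')
    · rcases mul_eq_zero.mp h.symm with h' | h'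
      · exact ha1 (by linear_combination h')
      · exact hd1 (by linear_combination h')

lemma card_filter_prod' {α β : Type*} [Fintype α] [Fintype β] (P : α × β → Prop) [DecidablePred P] :
    (univ.filter P).card = ∑ a : α, (univ.filter (fun b => P (a, b))).card := by
  rw [card_filter, ← univ_product_univ, sum_product]
  exact sum_congr rfl fun a _ => (card_filter _ _).symm

lemma count5 (hne : (-1 : F) ≠ 1) :
    ∑ ad : F × F, (if (0 : F) ∈ ({ad.1 * ad.2, ad.1 * ad.2 - ad.2, ad.1 * ad.2 + ad.1,
        (ad.1 - 1) * (ad.2 - 1)} : Finset F) then 0 else Fintype.card F)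
      = Fintype.card F * ((Fintype.card F - 2) * (Fintype.card F - 3)) := by
  set q := Fintype.card F with hq
  have step1 : ∀ ad : F × F, (if (0 : F) ∈ ({ad.1 * ad.2, ad.1 * ad.2 - ad.2, ad.1 * ad.2 + ad.1,
        (ad.1 - 1) * (ad.2 - 1)} : Finset F) then 0 else q)
      = if ((¬ ad.1 = 0 ∧ ¬ ad.1 = 1) ∧ (¬ ad.2 = 0 ∧ ¬ ad.2 = 1 ∧ ¬ ad.2 = -1)) then q else 0 := by
    intro ad
    by_cases h : (0 : F) ∈ ({ad.1 * ad.2, ad.1 * ad.2 - ad.2, ad.1 * ad.2 + ad.1,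
        (ad.1 - 1) * (ad.2 - 1)} : Finset F)
    · rw [if_pos h, if_neg]
      intro hc
      exact (not_mem_T_iff ad.1 ad.2).mpr hc h
    · rw [if_neg h, if_pos ((not_mem_T_iff ad.1 ad.2).mp h)]
  rw [sum_congr rfl (fun ad _ => step1 ad)]
  have step2 : ∑ ad : F × F, (if ((¬ ad.1 = 0 ∧ ¬ ad.1 = 1) ∧ (¬ ad.2 = 0 ∧ ¬ ad.2 = 1 ∧ ¬ ad.2 = -1)) then q else 0)
      = (univ.filter (fun ad : F × F => (¬ ad.1 = 0 ∧ ¬ ad.1 = 1) ∧ (¬ ad.2 = 0 ∧ ¬ ad.2 = 1 ∧ ¬ ad.2 = -1))).card * q := by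
    rw [card_filter, sum_mul]
    exact sum_congr rfl (fun ad _ => by split <;> simp
      )
  rw [step2, card_filter_prod']
  have inner : ∀ a : F, (univ.filter (fun d : F => (¬ a = 0 ∧ ¬ a = 1) ∧ (¬ d = 0 ∧ ¬ d = 1 ∧ ¬ d = -1))).card
      = if (¬ a = 0 ∧ ¬ a = 1) then q - 3 else 0 := by
    intro a
    by_cases ha : (¬ a = 0 ∧ ¬ a = 1)
    · rw [if_pos ha]
      have : (univ.filter (fun d : F => (¬ a = 0 ∧ ¬ a = 1) ∧ (¬ d = 0 ∧ ¬ d = 1 ∧ ¬ d = -1)))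
          = univ \ ({0, 1, -1} : Finset F) := by
        ext d
        simp [mem_sdiff, not_or, ha.1, ha.2, and_assoc]
      rw [this, card_sdiff_of_subset (subset_univ _), card_univ]
      congr 1
      rw [card_insert_of_notMem (by simp), card_insert_of_notMem (by simp [Ne.symm hne]),
        card_singleton]
    · rw [if_neg ha, card_eq_zero, filter_eq_empty_iff]
      intro d _
      exact fun hc => ha hc.1
  rw [sum_congr rfl (fun a _ => inner a)]
  have step3 : ∑ a : F, (if (¬ a = 0 ∧ ¬ a = 1) then q - 3 else 0)
      = (univ.filter (fun a : F => ¬ a = 0 ∧ ¬ a = 1)).card * (q - 3) := by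
    rw [card_filter, sum_mul]
    exact sum_congr rfl (fun a _ => by split <;> simp)
  rw [step3]
  have : (univ.filter (fun a : F => ¬ a = 0 ∧ ¬ a = 1)) = univ \ ({0, 1} : Finset F) := by
    ext a; simp [mem_sdiff, not_or]
  rw [this, card_sdiff_of_subset (subset_univ _), card_univ,
    show ({0, 1} : Finset F).card = 2 from by
      rw [card_insert_of_notMem (by simp), card_singleton]]
  ring


lemma main_count (hne : (-1 : F) ≠ 1) :
    (univ.filter (fun w : (F × F) × F × F =>
        w.2.1 * w.2.2 ∉ ({w.1.1 * w.1.2, w.1.1 * w.1.2 - w.1.2, w.1.1 * w.1.2 + w.1.1,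
          (w.1.1 - 1) * (w.1.2 - 1)} : Finset F))).card
      = ((Fintype.card F - 2)
            * ((Fintype.card F - 1) + (Fintype.card F - 2) * (Fintype.card F - 2))
          + (Fintype.card F - 1) * (Fintype.card F - 2)) * (Fintype.card F - 1)
        + Fintype.card F * ((Fintype.card F - 2) * (Fintype.card F - 3)) := by
  set q := Fintype.card F with hq
  rw [card_filter_prod]
  have h1 : ∀ ad : F × F,
      (univ.filter (fun bc : F × F => bc.1 * bc.2 ∉ ({ad.1 * ad.2, ad.1 * ad.2 - ad.2,
          ad.1 * ad.2 + ad.1, (ad.1 - 1) * (ad.2 - 1)} : Finset F))).card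
      = (univ \ ({0, ad.2, -ad.1, ad.1 + ad.2 - 1} : Finset F)).card * (q - 1)
        + (if (0 : F) ∈ ({ad.1 * ad.2, ad.1 * ad.2 - ad.2, ad.1 * ad.2 + ad.1,
            (ad.1 - 1) * (ad.2 - 1)} : Finset F) then 0 else q) := by
    intro ad
    rw [card_filter_not_mem_mul, card_T]
  rw [sum_congr rfl (fun ad _ => h1 ad), sum_add_distrib, ← sum_mul, sum_card_S, count5 hne]


lemma phiEU_two (R : Type*) [Ring R] (c : R) :
    phiEU R 2 c = Nat.card {y : R // IsExceptionalUnit y ∧ IsExceptionalUnit (c - y)} := by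
  apply Nat.card_congr
  refine ⟨fun x => ⟨x.1 0, x.2.1 0, ?_⟩, fun y => ⟨![y.1, c - y.1], ?_, ?_⟩, ?_, ?_⟩
  · have hs := x.2.2
    rw [Fin.sum_univ_two] at hs
    rw [sub_eq_of_eq_add' hs.symm]
    exact x.2.1 1
  · intro i
    fin_cases i
    · exact y.2.1
    · exact y.2.2
  · rw [Fin.sum_univ_two]
    show y.1 + (c - y.1) = c
    abel
  · rintro ⟨x, hx⟩
    ext i
    fin_cases i
    · rfl
    · show c - x 0 = x 1
      have hs := hx.2
      rw [Fin.sum_univ_two] at hs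
      exact sub_eq_of_eq_add' hs.symm
  · rintro ⟨y, hy⟩
    rfl

lemma isExceptionalUnit_conj {R : Type*} [Ring R] (u : Rˣ) (y : R) :
    IsExceptionalUnit ((↑u⁻¹ : R) * y * ↑u) ↔ IsExceptionalUnit y := by
  unfold IsExceptionalUnit
  have h1 : IsUnit ((↑u⁻¹ : R) * y * ↑u) ↔ IsUnit y := by
    rw [Units.isUnit_mul_units, Units.isUnit_units_mul]
  have h2 : (1 : R) - (↑u⁻¹ : R) * y * ↑u = (↑u⁻¹ : R) * (1 - y) * ↑u := by
    rw [mul_sub, sub_mul, mul_one, Units.inv_mul]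
  rw [h1, h2, Units.isUnit_mul_units, Units.isUnit_units_mul]

lemma isExceptionalUnit_conj' {R : Type*} [Ring R] (u : Rˣ) (y : R) :
    IsExceptionalUnit ((↑u : R) * y * ↑u⁻¹) ↔ IsExceptionalUnit y := by
  have := isExceptionalUnit_conj u⁻¹ y
  rw [inv_inv] at this
  exact this

lemma card_conj {R : Type*} [Ring R] (u : Rˣ) (c : R) :
    Nat.card {y : R // IsExceptionalUnit y ∧ IsExceptionalUnit (c - y)}
      = Nat.card {z : R // IsExceptionalUnit z ∧ IsExceptionalUnit ((↑u⁻¹ * c * ↑u : R) - z)} := by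
  apply Nat.card_congr
  refine ⟨fun y => ⟨↑u⁻¹ * ↑y * ↑u, ?_, ?_⟩, fun z => ⟨↑u * ↑z * ↑u⁻¹, ?_, ?_⟩, ?_, ?_⟩
  · exact (isExceptionalUnit_conj u y).mpr y.2.1
  · have h : (↑u⁻¹ * c * ↑u : R) - ↑u⁻¹ * ↑y * ↑u = ↑u⁻¹ * (c - ↑y) * ↑u := by
      rw [mul_sub, sub_mul]
    rw [h]
    exact (isExceptionalUnit_conj u _).mpr y.2.2
  · exact (isExceptionalUnit_conj' u ↑z).mpr z.2.1
  · have h : c - (↑u * ↑z * ↑u⁻¹ : R) = ↑u * ((↑u⁻¹ * c * ↑u : R) - ↑z) * ↑u⁻¹ := by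
      rw [mul_sub, sub_mul]
      congr 1
      simp [mul_assoc]
    rw [h]
    exact (isExceptionalUnit_conj' u _).mpr z.2.2
  · rintro ⟨y, hy⟩
    ext
    show ↑u * (↑u⁻¹ * y * ↑u) * ↑u⁻¹ = y
    simp [mul_assoc]
  · rintro ⟨z, hz⟩
    ext
    show ↑u⁻¹ * (↑u * z * ↑u⁻¹) * ↑u = z
    simp [mul_assoc]


noncomputable def mEquiv (F : Type*) [Field F] : Matrix (Fin 2) (Fin 2) F ≃ (F × F) × F × F where
  toFun z := ((z 0 0, z 1 1), (z 0 1, z 1 0))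
  invFun w := !![w.1.1, w.2.1; w.2.2, w.1.2]
  left_inv z := (Matrix.eta_fin_two z).symm
  right_inv w := by simp

lemma step_d :
    Nat.card {z : Matrix (Fin 2) (Fin 2) F // IsExceptionalUnit z ∧
        IsExceptionalUnit ((!![1,0;0,0] : Matrix (Fin 2) (Fin 2) F) - z)}
      = (univ.filter (fun w : (F × F) × F × F =>
          w.2.1 * w.2.2 ∉ ({w.1.1 * w.1.2, w.1.1 * w.1.2 - w.1.2, w.1.1 * w.1.2 + w.1.1,
            (w.1.1 - 1) * (w.1.2 - 1)} : Finset F))).card := by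
  classical
  have hiff : ∀ z : Matrix (Fin 2) (Fin 2) F, (IsExceptionalUnit z ∧
      IsExceptionalUnit ((!![1,0;0,0] : Matrix (Fin 2) (Fin 2) F) - z)) ↔
      ((mEquiv F z).2.1 * (mEquiv F z).2.2 ∉ ({(mEquiv F z).1.1 * (mEquiv F z).1.2,
        (mEquiv F z).1.1 * (mEquiv F z).1.2 - (mEquiv F z).1.2,
        (mEquiv F z).1.1 * (mEquiv F z).1.2 + (mEquiv F z).1.1,
        ((mEquiv F z).1.1 - 1) * ((mEquiv F z).1.2 - 1)} : Finset F)) := by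
    intro z
    set a := z 0 0 with ha
    set b := z 0 1 with hb
    set c := z 1 0 with hc
    set d := z 1 1 with hd
    have h1z : (1 : Matrix (Fin 2) (Fin 2) F) - z = !![1 - a, -b; -c, 1 - d] := by
      ext i j; fin_cases i <;> fin_cases j <;>
        simp [Matrix.sub_apply, Matrix.one_apply] <;> rfl
    have hEz : (!![1,0;0,0] : Matrix (Fin 2) (Fin 2) F) - z = !![1 - a, -b; -c, -d] := by
      ext i j; fin_cases i <;> fin_cases j <;>
        simp [Matrix.sub_apply] <;> rfl
    have h1Ez : (1 : Matrix (Fin 2) (Fin 2) F) - (!![1 - a, -b; -c, -d] : Matrix (Fin 2) (Fin 2) F)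
        = !![a, b; c, 1 + d] := by
      ext i j; fin_cases i <;> fin_cases j <;>
        simp [Matrix.sub_apply, Matrix.one_apply] <;> ring
    simp only [IsExceptionalUnit, Matrix.isUnit_iff_isUnit_det, isUnit_iff_ne_zero,
      h1z, hEz, h1Ez, Matrix.det_fin_two_of]
    rw [show (mEquiv F z) = ((a, d), (b, c)) from rfl]
    have hdz : z.det = a * d - b * c := by rw [Matrix.det_fin_two]
    rw [hdz]
    simp only [mem_insert, mem_singleton, not_or]
    constructor
    · rintro ⟨⟨g1, g2⟩, g3, g4⟩
      refine ⟨fun h => g1 ?_, fun h => g3 ?_, fun h => g4 ?_, fun h => g2 ?_⟩ <;>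
        linear_combination -h
    · rintro ⟨h1, h2, h3, h4⟩
      refine ⟨⟨fun g => h1 ?_, fun g => h4 ?_⟩, fun g => h2 ?_, fun g => h3 ?_⟩ <;>
        linear_combination -g
  rw [Nat.card_congr (Equiv.subtypeEquiv (q := fun w : (F × F) × F × F =>
      w.2.1 * w.2.2 ∉ ({w.1.1 * w.1.2, w.1.1 * w.1.2 - w.1.2, w.1.1 * w.1.2 + w.1.1,
        (w.1.1 - 1) * (w.1.2 - 1)} : Finset F)) (mEquiv F) hiff), Nat.card_eq_fintype_card,
    Fintype.card_subtype]
    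

lemma exists_conj (C : Matrix (Fin 2) (Fin 2) F) (hidem : C * C = C) (h0 : C ≠ 0) (h1 : C ≠ 1) :
    ∃ u : (Matrix (Fin 2) (Fin 2) F)ˣ,
      (↑u⁻¹ : Matrix (Fin 2) (Fin 2) F) * C * (↑u : Matrix (Fin 2) (Fin 2) F) = !![1, 0; 0, 0] := by
  set a := C 0 0 with ha
  set b := C 0 1 with hb
  set c := C 1 0 with hc
  set d := C 1 1 with hd
  have he : ∀ i j, C i 0 * C 0 j + C i 1 * C 1 j = C i j := by
    intro i j
    have := congrFun (congrFun hidem i) j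
    rwa [Matrix.mul_apply, Fin.sum_univ_two] at this
  have e00 : a * a + b * c = a := he 0 0
  have e01 : a * b + b * d = b := he 0 1
  have e10 : c * a + d * c = c := he 1 0
  have e11 : c * b + d * d = d := he 1 1
  have htr : a + d = 1 := by
    by_contra htr
    have hbz : b = 0 := by
      by_contra hbz
      have h2 : b * (a + d - 1) = 0 := by linear_combination e01
      rcases mul_eq_zero.mp h2 with h | h
      · exact absurd h hbz
      · exact htr (by linear_combination h)
    have hcz : c = 0 := by
      by_contra hcz
      have h2 : c * (a + d - 1) = 0 := by linear_combination e10
      rcases mul_eq_zero.mp h2 with h | h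
      · exact absurd h hcz
      · exact htr (by linear_combination h)
    have haa : a * (a - 1) = 0 := by linear_combination e00 - c * hbz
    have hdd : d * (d - 1) = 0 := by linear_combination e11 - b * hcz
    have had : a = d := by
      rcases mul_eq_zero.mp haa with h | h <;> rcases mul_eq_zero.mp hdd with h' | h'
      · rw [h, h']
      · exact absurd (show a + d = 1 by linear_combination h + h') htr
      · exact absurd (show a + d = 1 by linear_combination h + h') htr
      · linear_combination h - h'
    rcases mul_eq_zero.mp haa with h | h
    · apply h0
      ext i j
      fin_cases i <;> fin_cases j <;> simp [Matrix.zero_apply]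
      · show a = 0; exact h
      · show b = 0; exact hbz
      · show c = 0; exact hcz
      · show d = 0; rw [← had]; exact h
    · apply h1
      have ha1 : a = 1 := by linear_combination h
      ext i j
      fin_cases i <;> fin_cases j <;> simp [Matrix.one_apply]
      · show a = 1; exact ha1
      · show b = 0; exact hbz
      · show c = 0; exact hcz
      · show d = 1; rw [← had]; exact ha1
  have hdet : a * d = b * c := by linear_combination a * htr - e00
  have hCeta : C = !![a, b; c, d] := Matrix.eta_fin_two C
  by_cases haz : a = 0
  · have hd1 : d = 1 := by linear_combination htr - haz
    have hbc : b * c = 0 := by linear_combination d * haz - hdet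
    set P : Matrix (Fin 2) (Fin 2) F := !![b, 1; 1, -c] with hP
    have hdetP : P.det = -1 := by
      rw [hP, Matrix.det_fin_two_of]
      linear_combination -hbc
    have hPu : IsUnit P := by
      rw [Matrix.isUnit_iff_isUnit_det, hdetP, isUnit_iff_ne_zero]
      exact neg_ne_zero.mpr one_ne_zero
    refine ⟨hPu.unit, ?_⟩
    have hCP : C * P = P * !![1, 0; 0, 0] := by
      rw [hCeta, hP]
      ext i j
      fin_cases i <;> fin_cases j <;> simp [Matrix.mul_apply, Fin.sum_univ_two]
      · exact Or.inl haz
      · linear_combination haz - hbc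
      · linear_combination hbc + hd1
      · linear_combination -c * hd1
    calc (↑hPu.unit⁻¹ : Matrix (Fin 2) (Fin 2) F) * C * ↑hPu.unit
        = ↑hPu.unit⁻¹ * (C * P) := by rw [mul_assoc, hPu.unit_spec]
      _ = ↑hPu.unit⁻¹ * ((↑hPu.unit : Matrix (Fin 2) (Fin 2) F) * !![1, 0; 0, 0]) := by
          rw [hCP, hPu.unit_spec]
      _ = !![1, 0; 0, 0] := by rw [← mul_assoc, Units.inv_mul, one_mul]
  · set P : Matrix (Fin 2) (Fin 2) F := !![a, b; c, -a] with hP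
    have hdetP : P.det = -a := by
      rw [hP, Matrix.det_fin_two_of]
      linear_combination -e00
    have hPu : IsUnit P := by
      rw [Matrix.isUnit_iff_isUnit_det, hdetP, isUnit_iff_ne_zero]
      exact neg_ne_zero.mpr haz
    refine ⟨hPu.unit, ?_⟩
    have hCP : C * P = P * !![1, 0; 0, 0] := by
      rw [hCeta, hP]
      ext i j
      fin_cases i <;> fin_cases j <;> simp [Matrix.mul_apply, Fin.sum_univ_two]
      · exact e00
      · ring
      · exact e10
      · linear_combination -hdet
    calc (↑hPu.unit⁻¹ : Matrix (Fin 2) (Fin 2) F) * C * ↑hPu.unit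
        = ↑hPu.unit⁻¹ * (C * P) := by rw [mul_assoc, hPu.unit_spec]
      _ = ↑hPu.unit⁻¹ * ((↑hPu.unit : Matrix (Fin 2) (Fin 2) F) * !![1, 0; 0, 0]) := by
          rw [hCP, hPu.unit_spec]
      _ = !![1, 0; 0, 0] := by rw [← mul_assoc, Units.inv_mul, one_mul]


end Aux

/-- For a finite field `F` of odd order `q` and an idempotent
`C ∈ M₂(F)` of rank one (i.e. `C² = C`, `C ≠ 0`, `C ≠ I`),
`φ₂(M₂(F), C) = q⁴ − 4q³ + 5q² − 4q + 4`. -/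
theorem phi_two_of_rank_one_idempotent
    (F : Type*) [Field F] [Fintype F] (q : ℕ) (hq : Fintype.card F = q) (hodd : Odd q)
    (C : Matrix (Fin 2) (Fin 2) F) (hidem : C * C = C) (h0 : C ≠ 0) (h1 : C ≠ 1) :
    (phiEU (Matrix (Fin 2) (Fin 2) F) 2 C : ℤ) =
      (q : ℤ) ^ 4 - 4 * (q : ℤ) ^ 3 + 5 * (q : ℤ) ^ 2 - 4 * (q : ℤ) + 4 := by
  classical
  have hne : (-1 : F) ≠ 1 := by
    intro h
    have h2 : (2 : F) = 0 := by linear_combination -h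
    have hchar : ringChar F = 2 := CharP.ringChar_of_prime_eq_zero Nat.prime_two h2
    have heven : Fintype.card F % 2 = 0 := FiniteField.even_card_iff_char_two.mp hchar
    rw [hq] at heven
    obtain ⟨k, hk⟩ := hodd
    omega
  have hq3 : 3 ≤ q := by
    have h2 : 1 < Fintype.card F := Fintype.one_lt_card
    obtain ⟨k, hk⟩ := hodd
    omega
  obtain ⟨u, hu⟩ := exists_conj C hidem h0 h1
  rw [phiEU_two, card_conj u C, hu, step_d, main_count hne, hq]
  push_cast [Nat.cast_sub (show 1 ≤ q by omega), Nat.cast_sub (show 2 ≤ q by omega),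
    Nat.cast_sub (show 3 ≤ q by omega)]
  ring
end
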